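/- arXiv:1012.3441 — 7 statements merged into one kernel-verified Lean document; each statement's English description precedes it below -/
import Mathlib

section
/- Equip ℝ^d with the ℓ^p norm |ξ|_{ℓ^p} = (Σ_{j=1}^d |ξ^j|^p)^{1/p}, and let Γ = Γ₁ × ⋯ × Γ_d where each Γ_j ⊂ ℝ is a finite set. Then for every ξ = (ξ¹,…,ξ^d) with ξ^j ∈ conv(Γ_j) for all j, F_p(ξ; Γ)^p = Σ_{j=1}^d F_p(ξ^j; Γ_j)^p, i.e. the local dual quantization error of a product grid is the sum of the coordinatewise errors. -/
open MeasureTheory ENNReal Filter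

noncomputable section

/-- `F_p(ξ;Γ)^p` in `ℝ^d` for the `ℓ^p` norm: the cost of the point `x` is
`‖ξ - x‖_{ℓ^p}^p = ∑ j |ξ j - x j|^p`. -/
def FppowLp (d : ℕ) (p : ℝ) (Γ : Finset (Fin d → ℝ)) (ξ : Fin d → ℝ) : ℝ≥0∞ :=
  sInf { c | ∃ w : (Fin d → ℝ) → ℝ, (∀ x ∈ Γ, 0 ≤ w x) ∧ (∀ x ∈ Γ, w x ≤ 1) ∧
    (∑ x ∈ Γ, w x) = 1 ∧ (∑ x ∈ Γ, w x • x) = ξ ∧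
    c = ENNReal.ofReal (∑ x ∈ Γ, w x * ∑ j, |ξ j - x j| ^ p) }

/-- `F_p(ξ;Γ)^p` for a grid `Γ ⊂ ℝ`. -/
def Fppow1 (p : ℝ) (Γ : Finset ℝ) (ξ : ℝ) : ℝ≥0∞ :=
  sInf { c | ∃ w : ℝ → ℝ, (∀ x ∈ Γ, 0 ≤ w x) ∧ (∀ x ∈ Γ, w x ≤ 1) ∧
    (∑ x ∈ Γ, w x) = 1 ∧ (∑ x ∈ Γ, w x * x) = ξ ∧
    c = ENNReal.ofReal (∑ x ∈ Γ, w x * |ξ - x| ^ p) }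

/-- Product-weight reduction: a sum over the product grid of a product weight times a
function of one coordinate reduces to a one-dimensional sum. -/
lemma prodWeight_sum_coord (d : ℕ) (Γ : Fin d → Finset ℝ) (v : Fin d → ℝ → ℝ)
    (hsum : ∀ j, ∑ y ∈ Γ j, v j y = 1) (k : Fin d) (g : ℝ → ℝ) :
    ∑ x ∈ Fintype.piFinset Γ, (∏ j, v j (x j)) * g (x k) = ∑ y ∈ Γ k, v k y * g y := by
  classical
  have h1 : ∀ x : Fin d → ℝ, (∏ j, v j (x j)) * g (x k)
      = ∏ j, (v j (x j) * (if j = k then g (x j) else 1)) := by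
    intro x
    rw [Finset.prod_mul_distrib, Finset.prod_ite_eq' Finset.univ k (fun j => g (x j)),
      if_pos (Finset.mem_univ k)]
  simp_rw [h1]
  have h2 := Finset.prod_univ_sum Γ (fun j y => v j y * if j = k then g y else 1)
  rw [← h2]
  rw [Finset.prod_eq_single k]
  · simp
  · intro j _ hj
    simp only [if_neg hj, mul_one]
    exact hsum j
  · intro h; exact absurd (Finset.mem_univ k) h

/-- Marginal reduction: a sum of a weight times a function of one coordinate equals the
one-dimensional sum against the marginal weight. -/
lemma marginal_sum_coord (d : ℕ) (Γ : Fin d → Finset ℝ) (w : (Fin d → ℝ) → ℝ)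
    (k : Fin d) (g : ℝ → ℝ) [DecidableEq ℝ] :
    ∑ x ∈ Fintype.piFinset Γ, w x * g (x k) =
      ∑ y ∈ Γ k, (∑ x ∈ (Fintype.piFinset Γ).filter (fun x => x k = y), w x) * g y := by
  classical
  have hmaps : ∀ x ∈ Fintype.piFinset Γ, x k ∈ Γ k := by
    intro x hx
    exact (Fintype.mem_piFinset.mp hx) k
  rw [← Finset.sum_fiberwise_of_maps_to hmaps (fun x => w x * g (x k))]
  refine Finset.sum_congr rfl fun y _ => ?_
  rw [Finset.sum_mul]
  refine Finset.sum_congr rfl fun x hx => ?_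
  rw [(Finset.mem_filter.mp hx).2]

/-- local product quantization: for the `ℓ^p` norm on `ℝ^d` and a
product grid `Γ = Γ₁ × ⋯ × Γ_d`, the local dual quantization error satisfies
`F_p(ξ;Γ)^p = ∑ j F_p(ξ^j;Γ_j)^p` whenever each coordinate `ξ j` lies in
`conv (Γ j)`. -/
theorem FppowLp_piFinset (d : ℕ) (p : ℝ) (hp : 1 ≤ p)
    (Γ : Fin d → Finset ℝ) (ξ : Fin d → ℝ)
    (hξ : ∀ j, ξ j ∈ convexHull ℝ (Γ j : Set ℝ)) :
    FppowLp d p (Fintype.piFinset Γ) ξ = ∑ j, Fppow1 p (Γ j) (ξ j) := by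
  classical
  set S : Set ℝ≥0∞ := { c | ∃ w : (Fin d → ℝ) → ℝ,
    (∀ x ∈ Fintype.piFinset Γ, 0 ≤ w x) ∧ (∀ x ∈ Fintype.piFinset Γ, w x ≤ 1) ∧
    (∑ x ∈ Fintype.piFinset Γ, w x) = 1 ∧ (∑ x ∈ Fintype.piFinset Γ, w x • x) = ξ ∧
    c = ENNReal.ofReal (∑ x ∈ Fintype.piFinset Γ, w x * ∑ j, |ξ j - x j| ^ p) } with hS
  have hSdef : FppowLp d p (Fintype.piFinset Γ) ξ = sInf S := rfl
  set T : Fin d → Set ℝ≥0∞ := fun j => { c | ∃ w : ℝ → ℝ,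
    (∀ x ∈ Γ j, 0 ≤ w x) ∧ (∀ x ∈ Γ j, w x ≤ 1) ∧
    (∑ x ∈ Γ j, w x) = 1 ∧ (∑ x ∈ Γ j, w x * x) = ξ j ∧
    c = ENNReal.ofReal (∑ x ∈ Γ j, w x * |ξ j - x| ^ p) } with hT
  have hTdef : ∀ j, Fppow1 p (Γ j) (ξ j) = sInf (T j) := fun j => rfl
  -- each `T j` is nonempty, with all elements finite
  have hTne : ∀ j, (T j).Nonempty := by
    intro j
    have := hξ j
    rw [Finset.convexHull_eq] at this
    obtain ⟨w, hw0, hw1, hwc⟩ := this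
    rw [Finset.centerMass_eq_of_sum_1 _ _ hw1] at hwc
    refine ⟨_, w, hw0, ?_, hw1, ?_, rfl⟩
    · intro x hx
      calc w x ≤ ∑ y ∈ Γ j, w y := Finset.single_le_sum hw0 hx
        _ = 1 := hw1
    · simpa [smul_eq_mul] using hwc
  have hTtop : ∀ j, ∀ c ∈ T j, c ≠ ⊤ := by
    rintro j c ⟨w, -, -, -, -, rfl⟩
    exact ENNReal.ofReal_ne_top
  have hAlt : ∀ j, Fppow1 p (Γ j) (ξ j) ≠ ⊤ := by
    intro j
    obtain ⟨c, hc⟩ := hTne j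
    exact ne_top_of_le_ne_top (hTtop j c hc) (by rw [hTdef]; exact sInf_le hc)
  refine le_antisymm ?_ ?_
  · -- `≤` : use product weights built from near-optimal 1d weights
    rw [hSdef]
    refine ENNReal.le_of_forall_pos_le_add fun ε hε _ => ?_
    set δ : ℝ≥0∞ := (ε : ℝ≥0∞) / d with hδ
    have hδ0 : δ ≠ 0 := by
      rw [hδ]
      simp [ENNReal.div_eq_zero_iff, hε.ne']
    have hchoice : ∀ j, ∃ c ∈ T j, c ≤ Fppow1 p (Γ j) (ξ j) + δ := by
      intro j
      have hlt : sInf (T j) < Fppow1 p (Γ j) (ξ j) + δ := by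
        rw [← hTdef]
        exact ENNReal.lt_add_right (hAlt j) hδ0
      obtain ⟨c, hc, hclt⟩ := sInf_lt_iff.mp hlt
      exact ⟨c, hc, hclt.le⟩
    choose c hcT hcle using hchoice
    have hv : ∀ j, ∃ v : ℝ → ℝ, (∀ x ∈ Γ j, 0 ≤ v x) ∧ (∀ x ∈ Γ j, v x ≤ 1) ∧
        (∑ x ∈ Γ j, v x) = 1 ∧ (∑ x ∈ Γ j, v x * x) = ξ j ∧
        c j = ENNReal.ofReal (∑ x ∈ Γ j, v x * |ξ j - x| ^ p) := fun j => hcT j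
    choose v hv0 hv1 hvsum hvcenter hvcost using hv
    set w : (Fin d → ℝ) → ℝ := fun x => ∏ j, v j (x j) with hw
    have hmem : ∀ x ∈ Fintype.piFinset Γ, ∀ j, x j ∈ Γ j := by
      intro x hx; exact Fintype.mem_piFinset.mp hx
    have hw0 : ∀ x ∈ Fintype.piFinset Γ, 0 ≤ w x := fun x hx =>
      Finset.prod_nonneg fun j _ => hv0 j _ (hmem x hx j)
    have hw1 : ∀ x ∈ Fintype.piFinset Γ, w x ≤ 1 :=
      fun x hx => Finset.prod_le_one (fun j _ => hv0 j _ (hmem x hx j))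
        (fun j _ => hv1 j _ (hmem x hx j))
    have hwsum : (∑ x ∈ Fintype.piFinset Γ, w x) = 1 := by
      rw [hw, ← Finset.prod_univ_sum]
      simp [hvsum]
    have hwcenter : (∑ x ∈ Fintype.piFinset Γ, w x • x) = ξ := by
      funext k
      rw [Finset.sum_apply]
      simp only [Pi.smul_apply, smul_eq_mul]
      rw [hw]
      rw [prodWeight_sum_coord d Γ v hvsum k (fun y => y)]
      exact hvcenter k
    have hwcost : (∑ x ∈ Fintype.piFinset Γ, w x * ∑ j, |ξ j - x j| ^ p)
        = ∑ j, ∑ y ∈ Γ j, v j y * |ξ j - y| ^ p := by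
      have h2 : ∀ x : Fin d → ℝ, w x * ∑ j, |ξ j - x j| ^ p
          = ∑ j, w x * |ξ j - x j| ^ p := fun x => Finset.mul_sum _ _ _
      simp_rw [h2]
      rw [Finset.sum_comm]
      exact Finset.sum_congr rfl fun j _ =>
        prodWeight_sum_coord d Γ v hvsum j (fun y => |ξ j - y| ^ p)
    have hcost_nonneg : ∀ j, 0 ≤ ∑ y ∈ Γ j, v j y * |ξ j - y| ^ p := fun j =>
      Finset.sum_nonneg fun y hy =>
        mul_nonneg (hv0 j y hy) (Real.rpow_nonneg (abs_nonneg _) p)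
    have hmemS : ENNReal.ofReal
        (∑ x ∈ Fintype.piFinset Γ, w x * ∑ j, |ξ j - x j| ^ p) ∈ S :=
      ⟨w, hw0, hw1, hwsum, hwcenter, rfl⟩
    calc sInf S ≤ ENNReal.ofReal
          (∑ x ∈ Fintype.piFinset Γ, w x * ∑ j, |ξ j - x j| ^ p) := sInf_le hmemS
      _ = ∑ j, c j := by
          rw [hwcost, ENNReal.ofReal_sum_of_nonneg fun j _ => hcost_nonneg j]
          exact Finset.sum_congr rfl fun j _ => (hvcost j).symm
      _ ≤ ∑ j, (Fppow1 p (Γ j) (ξ j) + δ) := Finset.sum_le_sum fun j _ => hcle j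
      _ = (∑ j, Fppow1 p (Γ j) (ξ j)) + (d : ℝ≥0∞) * δ := by
          rw [Finset.sum_add_distrib]
          simp [Finset.sum_const, Finset.card_univ, nsmul_eq_mul]
      _ ≤ (∑ j, Fppow1 p (Γ j) (ξ j)) + ε := by
          gcongr
          rw [hδ]
          exact ENNReal.mul_div_le
  · -- `≥` : marginals of any feasible weight are feasible in each coordinate
    rw [hSdef]
    refine le_sInf ?_
    rintro cc ⟨w, hw0, hw1, hwsum, hwcenter, rfl⟩
    set m : Fin d → ℝ → ℝ := fun j y =>
      ∑ x ∈ (Fintype.piFinset Γ).filter (fun x => x j = y), w x with hm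
    have hm0 : ∀ j, ∀ y ∈ Γ j, 0 ≤ m j y := by
      intro j y _
      exact Finset.sum_nonneg fun x hx => hw0 x (Finset.mem_filter.mp hx).1
    have hmsum : ∀ j, ∑ y ∈ Γ j, m j y = 1 := by
      intro j
      have h := marginal_sum_coord d Γ w j (fun _ => 1)
      simp only [mul_one] at h
      rw [← h, hwsum]
    have hm1 : ∀ j, ∀ y ∈ Γ j, m j y ≤ 1 := by
      intro j y hy
      calc m j y ≤ ∑ y' ∈ Γ j, m j y' := Finset.single_le_sum (hm0 j) hy
        _ = 1 := hmsum j
    have hmcenter : ∀ j, ∑ y ∈ Γ j, m j y * y = ξ j := by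
      intro j
      have h := marginal_sum_coord d Γ w j (fun y => y)
      rw [hm, ← h]
      have h2 := congrFun hwcenter j
      rw [Finset.sum_apply] at h2
      simpa [smul_eq_mul] using h2
    have hcost : (∑ x ∈ Fintype.piFinset Γ, w x * ∑ j, |ξ j - x j| ^ p)
        = ∑ j, ∑ y ∈ Γ j, m j y * |ξ j - y| ^ p := by
      have h2 : ∀ x : Fin d → ℝ, w x * ∑ j, |ξ j - x j| ^ p
          = ∑ j, w x * |ξ j - x j| ^ p := fun x => Finset.mul_sum _ _ _
      simp_rw [h2]
      rw [Finset.sum_comm]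
      exact Finset.sum_congr rfl fun j _ =>
        marginal_sum_coord d Γ w j (fun y => |ξ j - y| ^ p)
    have hcost_nonneg : ∀ j, 0 ≤ ∑ y ∈ Γ j, m j y * |ξ j - y| ^ p := fun j =>
      Finset.sum_nonneg fun y hy =>
        mul_nonneg (hm0 j y hy) (Real.rpow_nonneg (abs_nonneg _) p)
    have hmemT : ∀ j, ENNReal.ofReal (∑ y ∈ Γ j, m j y * |ξ j - y| ^ p) ∈ T j :=
      fun j => ⟨m j, hm0 j, hm1 j, hmsum j, hmcenter j, rfl⟩
    calc ∑ j, Fppow1 p (Γ j) (ξ j)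
        ≤ ∑ j, ENNReal.ofReal (∑ y ∈ Γ j, m j y * |ξ j - y| ^ p) :=
          Finset.sum_le_sum fun j _ => by rw [hTdef]; exact sInf_le (hmemT j)
      _ = ENNReal.ofReal (∑ j, ∑ y ∈ Γ j, m j y * |ξ j - y| ^ p) :=
          (ENNReal.ofReal_sum_of_nonneg fun j _ => hcost_nonneg j).symm
      _ = ENNReal.ofReal (∑ x ∈ Fintype.piFinset Γ, w x * ∑ j, |ξ j - x j| ^ p) := by
          rw [hcost]

end
end

section
/- Let P = Σ_{i=1}^m sᵢ Pᵢ be a convex combination of probability measures on ℝ^d (sᵢ ≥ 0, Σ sᵢ = 1) and let n₁,…,n_m be positive integers with Σᵢ nᵢ ≤ n. Then the optimal dual quantization error satisfies d_{n,p}(P)^p ≤ Σ_{i=1}^m sᵢ · d_{nᵢ,p}(Pᵢ)^p. -/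
open MeasureTheory ENNReal Filter

noncomputable section

def Fppow {E : Type*} [NormedAddCommGroup E] [NormedSpace ℝ E]
    (p : ℝ) (Γ : Finset E) (ξ : E) : ℝ≥0∞ :=
  sInf { c | ∃ w : E → ℝ, (∀ x ∈ Γ, 0 ≤ w x) ∧ (∀ x ∈ Γ, w x ≤ 1) ∧
    (∑ x ∈ Γ, w x) = 1 ∧ (∑ x ∈ Γ, w x • x) = ξ ∧
    c = ENNReal.ofReal (∑ x ∈ Γ, w x * ‖ξ - x‖ ^ p) }

/-- `d_{n,p}(P)^p`: the optimal `p`-th power dual quantization error at level `n`. -/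
def dnpPow {E : Type*} [NormedAddCommGroup E] [NormedSpace ℝ E]
    [MeasurableSpace E] (n : ℕ) (p : ℝ) (P : Measure E) : ℝ≥0∞ :=
  ⨅ (Γ : Finset E) (_ : Γ.card ≤ n), ∫⁻ ξ, Fppow p Γ ξ ∂P

private lemma sum_ite_mem_subset {E : Type*} [DecidableEq E] {M : Type*} [AddCommMonoid M]
    {Γ G : Finset E} (hΓG : Γ ⊆ G) (f : E → M) :
    (∑ x ∈ G, if x ∈ Γ then f x else 0) = ∑ x ∈ Γ, f x := by
  rw [Finset.sum_ite_mem, Finset.inter_eq_right.mpr hΓG]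

/-- `Fppow` is antitone in the grid. -/
lemma Fppow_anti {E : Type*} [NormedAddCommGroup E] [NormedSpace ℝ E]
    (p : ℝ) {Γ G : Finset E} (hΓG : Γ ⊆ G) (ξ : E) :
    Fppow p G ξ ≤ Fppow p Γ ξ := by
  classical
  apply sInf_le_sInf
  rintro c ⟨w, hw0, hw1, hsum, hbar, hc⟩
  refine ⟨fun x => if x ∈ Γ then w x else 0, ?_, ?_, ?_, ?_, ?_⟩
  · intro x _; dsimp only; split
    · exact hw0 x ‹_›
    · exact le_refl 0
  · intro x _; dsimp only; split
    · exact hw1 x ‹_›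
    · exact zero_le_one
  · rw [sum_ite_mem_subset hΓG w]; exact hsum
  · have : (∑ x ∈ G, (if x ∈ Γ then w x else 0) • x)
        = ∑ x ∈ G, (if x ∈ Γ then w x • x else 0) := by
      refine Finset.sum_congr rfl fun x _ => ?_
      split <;> simp
    rw [this, sum_ite_mem_subset hΓG (fun x => w x • x)]; exact hbar
  · have : (∑ x ∈ G, (if x ∈ Γ then w x else 0) * ‖ξ - x‖ ^ p)
        = ∑ x ∈ G, (if x ∈ Γ then w x * ‖ξ - x‖ ^ p else 0) := by
      refine Finset.sum_congr rfl fun x _ => ?_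
      split <;> simp
    rw [this, sum_ite_mem_subset hΓG (fun x => w x * ‖ξ - x‖ ^ p)]; exact hc

/-- sub-linearity: if `P = ∑ i sᵢ • Pᵢ` is a convex combination of
probability measures and `∑ nᵢ ≤ n`, then
`d_{n,p}(P)^p ≤ ∑ i sᵢ d_{nᵢ,p}(Pᵢ)^p`. -/
theorem dnpPow_mixture_le {d m : ℕ} (p : ℝ) (hp : 1 ≤ p)
    (s : Fin m → ℝ≥0∞) (hs : ∑ i, s i = 1)
    (P : Measure (Fin d → ℝ)) (Pi : Fin m → Measure (Fin d → ℝ))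
    [∀ i, IsProbabilityMeasure (Pi i)]
    (hP : P = ∑ i, s i • Pi i)
    (nv : Fin m → ℕ) (hnv : ∀ i, 1 ≤ nv i) (n : ℕ) (hn : ∑ i, nv i ≤ n) :
    dnpPow n p P ≤ ∑ i, s i * dnpPow (nv i) p (Pi i) := by
  classical
  set E := Fin d → ℝ
  have hs_ne : ∀ i, s i ≠ ∞ := by
    intro i
    have h1 : s i ≤ 1 := hs ▸ Finset.single_le_sum (f := s) (fun j _ => zero_le)
      (Finset.mem_univ i)
    exact ne_top_of_le_ne_top one_ne_top h1
  -- index type of families of admissible grids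
  let ι := ∀ i : Fin m, {Γ : Finset E // Γ.card ≤ nv i}
  haveI : Nonempty ι := ⟨fun i => ⟨∅, by simp⟩⟩
  -- the per-coordinate cost
  set g : Fin m → Finset E → ℝ≥0∞ :=
    fun i Γ => s i * ∫⁻ ξ, Fppow p Γ ξ ∂(Pi i) with hg
  -- key estimate for each family of grids
  have key : ∀ Γ : ι, dnpPow n p P ≤ ∑ i, g i (Γ i).1 := by
    intro Γ
    set G : Finset E := Finset.univ.biUnion fun i => (Γ i).1 with hG
    have hcard : G.card ≤ n := by
      calc G.card ≤ ∑ i, ((Γ i).1).card := Finset.card_biUnion_le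
        _ ≤ ∑ i, nv i := Finset.sum_le_sum fun i _ => (Γ i).2
        _ ≤ n := hn
    have h1 : dnpPow n p P ≤ ∫⁻ ξ, Fppow p G ξ ∂P := by
      exact iInf₂_le G hcard
    have h2 : (∫⁻ ξ, Fppow p G ξ ∂P) = ∑ i, s i * ∫⁻ ξ, Fppow p G ξ ∂(Pi i) := by
      rw [hP, lintegral_finset_sum_measure]
      simp [lintegral_smul_measure]
    refine h1.trans (h2 ▸ Finset.sum_le_sum fun i _ => ?_)
    refine mul_le_mul_right (lintegral_mono fun ξ => ?_) _
    exact Fppow_anti p (Finset.subset_biUnion_of_mem _ (Finset.mem_univ i)) ξ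
  calc dnpPow n p P ≤ ⨅ Γ : ι, ∑ i, g i (Γ i).1 := le_iInf key
    _ = ∑ i, ⨅ Γ : ι, g i (Γ i).1 := by
        refine ENNReal.iInf_sum fun t Γ₁ Γ₂ => ?_
        refine ⟨fun a => if g a (Γ₁ a).1 ≤ g a (Γ₂ a).1 then Γ₁ a else Γ₂ a,
          fun a _ => ?_⟩
        dsimp only; split
        · exact ⟨le_refl _, ‹_›⟩
        · exact ⟨le_of_not_ge ‹_›, le_refl _⟩
    _ = ∑ i, s i * dnpPow (nv i) p (Pi i) := by
        refine Finset.sum_congr rfl fun i _ => ?_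
        haveI : Nonempty {Γ : Finset E // Γ.card ≤ nv i} := ⟨⟨∅, by simp⟩⟩
        have hsurj : Function.Surjective (fun Γ : ι => Γ i) := by
          intro Γ'
          exact ⟨Function.update (fun j => ⟨∅, by simp⟩) i Γ', by simp⟩
        have h1 : (⨅ Γ : ι, g i (Γ i).1) = ⨅ Γ' : {Γ : Finset E // Γ.card ≤ nv i}, g i Γ'.1 :=
          hsurj.iInf_comp (g := fun Γ' => g i Γ'.1)
        rw [h1]
        have h2 : (⨅ Γ' : {Γ : Finset E // Γ.card ≤ nv i}, g i Γ'.1)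
            = ⨅ Γ' : {Γ : Finset E // Γ.card ≤ nv i},
              s i * ∫⁻ ξ, Fppow p Γ'.1 ξ ∂(Pi i) := rfl
        rw [h2, ← ENNReal.mul_iInf (fun h => absurd h (hs_ne i))]
        congr 1
        rw [dnpPow, iInf_subtype]
end
end

section
/- For the uniform distribution on [0,1] one has the exact formula d_{n,p}(U([0,1])) = (2/((p+1)(p+2)))^{1/p} · 1/(n−1) for n ≥ 2. In particular the one-dimensional dual quantization coefficient satisfies Q^{dq}_{|·|,p,1} = lim_n n · d_{n,p}(U([0,1])) = (2/((p+1)(p+2)))^{1/p}. -/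
open MeasureTheory ENNReal Filter

noncomputable section

def dnpPow1 (n : ℕ) (p : ℝ) (P : Measure ℝ) : ℝ≥0∞ :=
  ⨅ (Γ : Finset ℝ) (_ : Γ.card ≤ n), ∫⁻ ξ, Fppow1 p Γ ξ ∂P


open Set
open scoped Classical

def lineF (p u v ξ x : ℝ) : ℝ :=
  ((v - x) * (ξ - u) ^ p + (x - u) * (v - ξ) ^ p) / (v - u)

lemma convexOn_abs_rpow {p : ℝ} (hp : 1 ≤ p) :
    ConvexOn ℝ Set.univ (fun y : ℝ => |y| ^ p) := by
  refine ⟨convex_univ, ?_⟩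
  intro x _ y _ a b ha hb hab
  simp only [smul_eq_mul]
  calc |a * x + b * y| ^ p ≤ (a * |x| + b * |y|) ^ p := by
        apply Real.rpow_le_rpow (abs_nonneg _) ?_ (by linarith)
        calc |a * x + b * y| ≤ |a * x| + |b * y| := abs_add_le _ _
          _ = a * |x| + b * |y| := by
              rw [abs_mul, abs_mul, abs_of_nonneg ha, abs_of_nonneg hb]
    _ ≤ a * |x| ^ p + b * |y| ^ p := by
        have := (convexOn_rpow hp).2 (mem_Ici.2 (abs_nonneg x)) (mem_Ici.2 (abs_nonneg y))
          ha hb hab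
        simpa [smul_eq_mul] using this

lemma lineF_le {p u v ξ x : ℝ} (hp : 1 ≤ p) (huv : u < v) (hξ : ξ ∈ Icc u v)
    (hx : x ≤ u ∨ v ≤ x) : lineF p u v ξ x ≤ |ξ - x| ^ p := by
  obtain ⟨hξu, hξv⟩ := hξ
  have hvu : (0:ℝ) < v - u := by linarith
  rcases hx with hx | hx
  · rcases eq_or_lt_of_le hx with rfl | hx
    · rw [lineF, abs_of_nonneg (by linarith : (0:ℝ) ≤ ξ - x), sub_self, zero_mul, add_zero,
        mul_div_cancel_left₀ _ hvu.ne']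
    · have hvx : (0:ℝ) < v - x := by linarith
      have ha : (0:ℝ) ≤ (v - u) / (v - x) := by positivity
      have hb : (0:ℝ) ≤ (u - x) / (v - x) := div_nonneg (by linarith) hvx.le
      have hab : (v - u) / (v - x) + (u - x) / (v - x) = 1 := by field_simp; ring
      have hcomb : (v - u) / (v - x) * (ξ - x) + (u - x) / (v - x) * (ξ - v) = ξ - u := by
        field_simp; ring
      have hconv := (convexOn_abs_rpow hp).2 (mem_univ (ξ - x)) (mem_univ (ξ - v)) ha hb hab
      simp only [smul_eq_mul] at hconv
      rw [hcomb, abs_of_nonneg (by linarith : (0:ℝ) ≤ ξ - u),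
        abs_of_nonpos (by linarith : ξ - v ≤ 0), neg_sub] at hconv
      rw [lineF, div_le_iff₀ hvu]
      have h2 := mul_le_mul_of_nonneg_left hconv hvx.le
      have h3 : (v - x) * ((v - u) / (v - x) * |ξ - x| ^ p + (u - x) / (v - x) * (v - ξ) ^ p)
          = (v - u) * |ξ - x| ^ p + (u - x) * (v - ξ) ^ p := by
        field_simp
      rw [h3] at h2
      nlinarith [h2]
  · rcases eq_or_lt_of_le hx with rfl | hx
    · rw [lineF, abs_of_nonpos (by linarith : ξ - v ≤ 0), neg_sub, sub_self, zero_mul, zero_add,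
        mul_comm, mul_div_assoc, div_self hvu.ne', mul_one]
    · have hxu : (0:ℝ) < x - u := by linarith
      have ha : (0:ℝ) ≤ (x - v) / (x - u) := div_nonneg (by linarith) hxu.le
      have hb : (0:ℝ) ≤ (v - u) / (x - u) := by positivity
      have hab : (x - v) / (x - u) + (v - u) / (x - u) = 1 := by field_simp; ring
      have hcomb : (x - v) / (x - u) * (ξ - u) + (v - u) / (x - u) * (ξ - x) = ξ - v := by
        field_simp; ring
      have hconv := (convexOn_abs_rpow hp).2 (mem_univ (ξ - u)) (mem_univ (ξ - x)) ha hb hab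
      simp only [smul_eq_mul] at hconv
      rw [hcomb, abs_of_nonpos (by linarith : ξ - v ≤ 0), neg_sub,
        abs_of_nonneg (by linarith : (0:ℝ) ≤ ξ - u)] at hconv
      rw [lineF, div_le_iff₀ hvu]
      have h2 := mul_le_mul_of_nonneg_left hconv hxu.le
      have h3 : (x - u) * ((x - v) / (x - u) * (ξ - u) ^ p + (v - u) / (x - u) * |ξ - x| ^ p)
          = (x - v) * (ξ - u) ^ p + (v - u) * |ξ - x| ^ p := by
        field_simp
      rw [h3] at h2
      nlinarith [h2]

lemma sum_pair_ite {Γ : Finset ℝ} {u v : ℝ} (hu : u ∈ Γ) (hv : v ∈ Γ) (hne : u ≠ v)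
    (A B : ℝ) (g : ℝ → ℝ) :
    ∑ x ∈ Γ, (if x = u then A else if x = v then B else 0) * g x = A * g u + B * g v := by
  classical
  rw [← Finset.sum_subset (s₁ := {u, v})
    (by intro x hx; simp at hx; rcases hx with rfl | rfl <;> assumption)
    (by intro x _ hx; simp at hx; rw [if_neg hx.1, if_neg hx.2, zero_mul])]
  rw [Finset.sum_pair hne]
  rw [if_pos rfl, if_neg hne.symm, if_pos rfl]

lemma Fppow1_le_lineF {p : ℝ} {Γ : Finset ℝ} {u v ξ : ℝ} (hu : u ∈ Γ) (hv : v ∈ Γ)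
    (huv : u < v) (hξ : ξ ∈ Icc u v) :
    Fppow1 p Γ ξ ≤ ENNReal.ofReal (lineF p u v ξ ξ) := by
  classical
  obtain ⟨hξu, hξv⟩ := hξ
  have hvu : (0:ℝ) < v - u := by linarith
  set A : ℝ := (v - ξ) / (v - u) with hA
  set B : ℝ := (ξ - u) / (v - u) with hB
  have hA0 : 0 ≤ A := div_nonneg (by linarith) hvu.le
  have hB0 : 0 ≤ B := div_nonneg (by linarith) hvu.le
  have hA1 : A ≤ 1 := by rw [hA, div_le_one hvu]; linarith
  have hB1 : B ≤ 1 := by rw [hB, div_le_one hvu]; linarith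
  apply sInf_le
  refine ⟨fun x => if x = u then A else if x = v then B else 0, ?_, ?_, ?_, ?_, ?_⟩
  · intro x _; dsimp only; split_ifs <;> simp [hA0, hB0]
  · intro x _; dsimp only; split_ifs <;> simp [hA1, hB1]
  · have h := sum_pair_ite hu hv huv.ne A B (fun _ => 1)
    simp only [mul_one] at h
    rw [h, hA, hB]
    field_simp
    ring
  · have := sum_pair_ite hu hv huv.ne A B id
    simp only [id] at this
    rw [this, hA, hB]; field_simp; ring
  · congr 1
    rw [sum_pair_ite hu hv huv.ne A B (fun x => |ξ - x| ^ p)]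
    rw [abs_of_nonneg (by linarith : (0:ℝ) ≤ ξ - u),
      abs_of_nonpos (by linarith : ξ - v ≤ 0), neg_sub, lineF, hA, hB]
    ring

lemma lineF_le_Fppow1 {p : ℝ} {Γ : Finset ℝ} {u v ξ : ℝ} (hp : 1 ≤ p) (huv : u < v)
    (hξ : ξ ∈ Icc u v) (hΓ : ∀ x ∈ Γ, x ≤ u ∨ v ≤ x) :
    ENNReal.ofReal (lineF p u v ξ ξ) ≤ Fppow1 p Γ ξ := by
  apply le_sInf
  rintro c ⟨w, hw0, hw1, hsum, hbar, rfl⟩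
  apply ENNReal.ofReal_le_ofReal
  have key : ∀ x ∈ Γ, lineF p u v ξ x ≤ |ξ - x| ^ p := fun x hx =>
    lineF_le hp huv hξ (hΓ x hx)
  have expand : ∀ x : ℝ, w x * lineF p u v ξ x =
      w x * ((v * (ξ - u) ^ p - u * (v - ξ) ^ p) / (v - u)) +
      (w x * x) * (((v - ξ) ^ p - (ξ - u) ^ p) / (v - u)) := by
    intro x; rw [lineF]; ring
  calc lineF p u v ξ ξ = ∑ x ∈ Γ, w x * lineF p u v ξ x := by
        rw [Finset.sum_congr rfl fun x _ => expand x, Finset.sum_add_distrib,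
          ← Finset.sum_mul, ← Finset.sum_mul, hsum, hbar, one_mul, lineF]
        ring
    _ ≤ ∑ x ∈ Γ, w x * |ξ - x| ^ p :=
        Finset.sum_le_sum fun x hx => mul_le_mul_of_nonneg_left (key x hx) (hw0 x hx)
lemma rpow_succ2 {t : ℝ} (ht : 0 ≤ t) (q : ℝ) (hq : 0 < q) : t ^ (q + 1) = t ^ q * t := by
  rcases ht.eq_or_lt with rfl | h
  · rw [Real.zero_rpow (by positivity : q + 1 ≠ 0), Real.zero_rpow hq.ne', zero_mul]
  · rw [Real.rpow_add_one h.ne']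

lemma integral_rpow_sub_right {p u v : ℝ} (hp : 1 ≤ p) :
    ∫ ξ in u..v, (ξ - u) ^ p = (v - u) ^ (p + 1) / (p + 1) := by
  have h := intervalIntegral.integral_comp_sub_right (a := u) (b := v)
    (fun t : ℝ => t ^ p) u
  rw [h, sub_self, integral_rpow (Or.inl (by linarith)),
    Real.zero_rpow (by positivity : p + 1 ≠ 0), sub_zero]

lemma integral_rpow_sub_left {p u v : ℝ} (hp : 1 ≤ p) :
    ∫ ξ in u..v, (v - ξ) ^ p = (v - u) ^ (p + 1) / (p + 1) := by
  have h := intervalIntegral.integral_comp_sub_left (a := u) (b := v)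
    (fun t : ℝ => t ^ p) v
  rw [h, sub_self, integral_rpow (Or.inl (by linarith)),
    Real.zero_rpow (by positivity : p + 1 ≠ 0), sub_zero]

lemma cont_sub_rpow (u q : ℝ) (hq : 0 ≤ q) : Continuous fun ξ : ℝ => (ξ - u) ^ q :=
  (Real.continuous_rpow_const hq).comp (continuous_id.sub continuous_const)

lemma cont_sub_rpow' (v q : ℝ) (hq : 0 ≤ q) : Continuous fun ξ : ℝ => (v - ξ) ^ q :=
  (Real.continuous_rpow_const hq).comp (continuous_const.sub continuous_id)

lemma continuous_chord {p u v : ℝ} (hp : 1 ≤ p) :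
    Continuous fun ξ : ℝ => lineF p u v ξ ξ := by
  have h0 : (0:ℝ) ≤ p := by linarith
  unfold lineF
  exact (((continuous_const.sub continuous_id).mul (cont_sub_rpow u p h0)).add
    ((continuous_id.sub continuous_const).mul (cont_sub_rpow' v p h0))).div_const _
  
set_option maxHeartbeats 2000000 in
lemma integral_chord {p u v : ℝ} (hp : 1 ≤ p) (huv : u < v) :
    ∫ ξ in Ioo u v, lineF p u v ξ ξ = 2 * (v - u) ^ (p + 1) / ((p + 1) * (p + 2)) := by
  have h0 : (0:ℝ) ≤ p := by linarith
  have hp1 : (0:ℝ) < p + 1 := by linarith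
  have hp2 : (0:ℝ) < p + 2 := by linarith
  have hX : (0:ℝ) < v - u := by linarith
  rw [← MeasureTheory.integral_Ioc_eq_integral_Ioo,
    ← intervalIntegral.integral_of_le huv.le]
  have e1 : EqOn (fun ξ : ℝ => lineF p u v ξ ξ)
      (fun ξ : ℝ => ((v - u) * (ξ - u) ^ p - (ξ - u) ^ (p + 1)
        + ((v - u) * (v - ξ) ^ p - (v - ξ) ^ (p + 1))) / (v - u)) (uIcc u v) := by
    intro ξ hξ
    rw [uIcc_of_le huv.le] at hξ
    obtain ⟨h1, h2⟩ := hξ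
    simp only [lineF]
    rw [rpow_succ2 (by linarith : (0:ℝ) ≤ ξ - u) p (by positivity),
      rpow_succ2 (by linarith : (0:ℝ) ≤ v - ξ) p (by positivity)]
    ring
  rw [intervalIntegral.integral_congr e1]
  have i1 : IntervalIntegrable (fun ξ : ℝ => (ξ - u) ^ p) volume u v :=
    (cont_sub_rpow u p h0).intervalIntegrable u v
  have i2 : IntervalIntegrable (fun ξ : ℝ => (ξ - u) ^ (p + 1)) volume u v :=
    (cont_sub_rpow u (p+1) (by linarith)).intervalIntegrable u v
  have i3 : IntervalIntegrable (fun ξ : ℝ => (v - ξ) ^ p) volume u v :=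
    (cont_sub_rpow' v p h0).intervalIntegrable u v
  have i4 : IntervalIntegrable (fun ξ : ℝ => (v - ξ) ^ (p + 1)) volume u v :=
    (cont_sub_rpow' v (p+1) (by linarith)).intervalIntegrable u v
  rw [intervalIntegral.integral_div]
  rw [intervalIntegral.integral_add (((i1.const_mul _).sub i2)) ((i3.const_mul _).sub i4),
    intervalIntegral.integral_sub (i1.const_mul _) i2,
    intervalIntegral.integral_sub (i3.const_mul _) i4,
    intervalIntegral.integral_const_mul, intervalIntegral.integral_const_mul,
    integral_rpow_sub_right hp, integral_rpow_sub_left hp,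
    integral_rpow_sub_right (by linarith : (1:ℝ) ≤ p + 1),
    integral_rpow_sub_left (by linarith : (1:ℝ) ≤ p + 1)]
  rw [show p + 1 + 1 = p + 2 by ring]
  rw [show (v-u) ^ (p+2) = (v-u)^(p+1) * (v-u) by
    rw [← rpow_succ2 hX.le (p+1) (by positivity), show p+1+1 = p+2 by ring]]
  field_simp
  ring

lemma lintegral_chord {p u v : ℝ} (hp : 1 ≤ p) (huv : u < v) :
    ∫⁻ ξ in Ioo u v, ENNReal.ofReal (lineF p u v ξ ξ) =
      ENNReal.ofReal (2 * (v - u) ^ (p + 1) / ((p + 1) * (p + 2))) := by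
  rw [← ofReal_integral_eq_lintegral_ofReal, integral_chord hp huv]
  · exact ((continuous_chord hp).integrableOn_Icc).mono_set Ioo_subset_Icc_self
  · refine (ae_restrict_iff' measurableSet_Ioo).2 (ae_of_all _ fun ξ hξ => ?_)
    obtain ⟨h1, h2⟩ := hξ
    unfold lineF
    apply div_nonneg _ (by linarith)
    have := Real.rpow_nonneg (by linarith : (0:ℝ) ≤ ξ - u) p
    have := Real.rpow_nonneg (by linarith : (0:ℝ) ≤ v - ξ) p
    nlinarith
lemma radon2 {p : ℝ} (hp : 1 ≤ p) {s t k1 k2 : ℝ} (hs : 0 ≤ s) (ht : 0 ≤ t)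
    (hk1 : 0 < k1) (hk2 : 0 < k2) :
    (s + t) ^ (p + 1) / (k1 + k2) ^ p ≤ s ^ (p + 1) / k1 ^ p + t ^ (p + 1) / k2 ^ p := by
  have hp0 : (0:ℝ) < p := by linarith
  have hK : (0:ℝ) < k1 + k2 := by linarith
  have h := (convexOn_rpow (by linarith : (1:ℝ) ≤ p + 1)).2
    (mem_Ici.2 (div_nonneg hs hk1.le)) (mem_Ici.2 (div_nonneg ht hk2.le))
    (div_nonneg hk1.le hK.le) (div_nonneg hk2.le hK.le)
    (by field_simp : k1 / (k1 + k2) + k2 / (k1 + k2) = 1)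
  simp only [smul_eq_mul] at h
  rw [show k1 / (k1 + k2) * (s / k1) + k2 / (k1 + k2) * (t / k2) = (s + t) / (k1 + k2) by
    field_simp] at h
  rw [Real.div_rpow (by linarith) hK.le, Real.div_rpow hs hk1.le, Real.div_rpow ht hk2.le] at h
  rw [rpow_succ2 hK.le p hp0, rpow_succ2 hk1.le p hp0, rpow_succ2 hk2.le p hp0] at h
  have hk1p : (0:ℝ) < k1 ^ p := Real.rpow_pos_of_pos hk1 p
  have hk2p : (0:ℝ) < k2 ^ p := Real.rpow_pos_of_pos hk2 p
  have hKp : (0:ℝ) < (k1 + k2) ^ p := Real.rpow_pos_of_pos hK p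
  have h2 := mul_le_mul_of_nonneg_left h hK.le
  calc (s + t) ^ (p + 1) / (k1 + k2) ^ p
      = (k1 + k2) * ((s + t) ^ (p + 1) / ((k1 + k2) ^ p * (k1 + k2))) := by
        field_simp
    _ ≤ (k1 + k2) * (k1 / (k1 + k2) * (s ^ (p + 1) / (k1 ^ p * k1))
        + k2 / (k1 + k2) * (t ^ (p + 1) / (k2 ^ p * k2))) := h2
    _ = s ^ (p + 1) / k1 ^ p + t ^ (p + 1) / k2 ^ p := by
        field_simp
lemma lower_int {p : ℝ} (hp : 1 ≤ p) :
    ∀ (k : ℕ) (Γ : Finset ℝ) (u v : ℝ), u < v →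
      (Γ.filter (fun x => x ∈ Ioo u v)).card = k →
      ENNReal.ofReal (2 * (v - u) ^ (p + 1) / ((p + 1) * (p + 2) * ((k : ℝ) + 1) ^ p))
        ≤ ∫⁻ ξ in Ioo u v, Fppow1 p Γ ξ := by
  intro k
  induction k using Nat.strong_induction_on with
  | _ k ih =>
  intro Γ u v huv hcard
  rcases Nat.eq_zero_or_pos k with rfl | hk
  · -- base case : no grid point strictly inside (u,v)
    have hfil : ∀ x ∈ Γ, x ≤ u ∨ v ≤ x := by
      intro x hx
      by_contra hcon
      push_neg at hcon
      have hmem : x ∈ Γ.filter (fun x => x ∈ Ioo u v) :=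
        Finset.mem_filter.2 ⟨hx, hcon.1, hcon.2⟩
      rw [Finset.card_eq_zero] at hcard
      rw [hcard] at hmem
      exact absurd hmem (Finset.notMem_empty x)
    have hmono : ∫⁻ ξ in Ioo u v, ENNReal.ofReal (lineF p u v ξ ξ)
        ≤ ∫⁻ ξ in Ioo u v, Fppow1 p Γ ξ := by
      refine lintegral_mono_ae ((ae_restrict_iff' measurableSet_Ioo).2
        (ae_of_all _ fun ξ hξ => ?_))
      exact lineF_le_Fppow1 hp huv ⟨hξ.1.le, hξ.2.le⟩ hfil
    rw [lintegral_chord hp huv] at hmono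
    refine le_trans (le_of_eq ?_) hmono
    norm_num
  · -- inductive step
    have hne : (Γ.filter (fun x => x ∈ Ioo u v)).Nonempty :=
      Finset.card_pos.1 (hcard ▸ hk)
    obtain ⟨c, hc⟩ := hne
    rw [Finset.mem_filter] at hc
    obtain ⟨hcΓ, hcuv⟩ := hc
    obtain ⟨huc, hcv⟩ := mem_Ioo.1 hcuv
    have hsplit : Γ.filter (fun x => x ∈ Ioo u v) =
        ((Γ.filter (fun x => x ∈ Ioo u c)) ∪ (Γ.filter (fun x => x ∈ Ioo c v))) ∪ {c} := by
      ext x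
      simp only [Finset.mem_filter, Finset.mem_union, Finset.mem_singleton, mem_Ioo]
      constructor
      · rintro ⟨hxΓ, hux, hxv⟩
        rcases lt_trichotomy x c with h | h | h
        · exact Or.inl (Or.inl ⟨hxΓ, hux, h⟩)
        · exact Or.inr h
        · exact Or.inl (Or.inr ⟨hxΓ, h, hxv⟩)
      · rintro ((⟨hxΓ, h1, h2⟩ | ⟨hxΓ, h1, h2⟩) | rfl)
        · exact ⟨hxΓ, h1, h2.trans hcv⟩
        · exact ⟨hxΓ, huc.trans h1, h2⟩
        · exact ⟨hcΓ, huc, hcv⟩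
    set k1 := (Γ.filter (fun x => x ∈ Ioo u c)).card with hk1
    set k2 := (Γ.filter (fun x => x ∈ Ioo c v)).card with hk2
    have hk12 : k1 + k2 + 1 = k := by
      have d1 : Disjoint (Γ.filter (fun x => x ∈ Ioo u c)) (Γ.filter (fun x => x ∈ Ioo c v)) := by
        rw [Finset.disjoint_left]
        intro x hx1 hx2
        rw [Finset.mem_filter, mem_Ioo] at hx1 hx2
        linarith [hx1.2.2, hx2.2.1]
      have d2 : Disjoint ((Γ.filter (fun x => x ∈ Ioo u c)) ∪ (Γ.filter (fun x => x ∈ Ioo c v)))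
          ({c} : Finset ℝ) := by
        rw [Finset.disjoint_right]
        intro x hx
        rw [Finset.mem_singleton] at hx
        subst hx
        intro hmem
        rcases Finset.mem_union.1 hmem with h | h <;>
          · rw [Finset.mem_filter, mem_Ioo] at h
            linarith [h.2.1, h.2.2]
      rw [← hcard, hsplit, Finset.card_union_of_disjoint d2,
        Finset.card_union_of_disjoint d1, Finset.card_singleton]
    have h1 := ih k1 (by omega) Γ u c huc rfl
    have h2 := ih k2 (by omega) Γ c v hcv rfl
    have hmono : (∫⁻ ξ in Ioo u c, Fppow1 p Γ ξ) + ∫⁻ ξ in Ioo c v, Fppow1 p Γ ξ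
        ≤ ∫⁻ ξ in Ioo u v, Fppow1 p Γ ξ := by
      have hdisj : Disjoint (Ioo u c) (Ioo c v) := by
        rw [Set.disjoint_left]
        rintro x ⟨_, h1⟩ ⟨h2, _⟩
        linarith
      rw [← lintegral_union measurableSet_Ioo hdisj]
      apply lintegral_mono_set
      rintro x (⟨ha, hb⟩ | ⟨ha, hb⟩) <;> exact ⟨by linarith, by linarith⟩
    refine le_trans ?_ (le_trans (add_le_add h1 h2) hmono)
    have hcu : (0:ℝ) ≤ c - u := by linarith
    have hvc : (0:ℝ) ≤ v - c := by linarith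
    have hD : (0:ℝ) < (p + 1) * (p + 2) := by nlinarith
    rw [← ENNReal.ofReal_add
      (div_nonneg (mul_nonneg (by norm_num) (Real.rpow_nonneg hcu _)) (by positivity))
      (div_nonneg (mul_nonneg (by norm_num) (Real.rpow_nonneg hvc _)) (by positivity))]
    apply ENNReal.ofReal_le_ofReal
    have hr := radon2 hp (s := c - u) (t := v - c)
      (k1 := (k1:ℝ) + 1) (k2 := (k2:ℝ) + 1)
      (by linarith) (by linarith) (by positivity) (by positivity)
    rw [show (c - u) + (v - c) = v - u by ring,
      show ((k1:ℝ) + 1) + ((k2:ℝ) + 1) = (k:ℝ) + 1 by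
        push_cast [← hk12]; ring] at hr
    have e : ∀ A B : ℝ, 0 < B →
        2 * A / ((p + 1) * (p + 2) * B) = (2 / ((p + 1) * (p + 2))) * (A / B) := by
      intro A B hB; field_simp
    rw [e _ _ (by positivity), e _ _ (by positivity), e _ _ (by positivity), ← mul_add]
    apply mul_le_mul_of_nonneg_left hr (by positivity)
/-- If `Fppow1` is infinite on a nonempty open subinterval of `[0,1]`, the integral dominates
anything. -/
lemma le_lintegral_of_top {p : ℝ} {Γ : Finset ℝ} {a b : ℝ} (hab : a < b)
    (hsub : Ioo a b ⊆ Icc (0:ℝ) 1) (h : ∀ ξ ∈ Ioo a b, Fppow1 p Γ ξ = ⊤) (C : ℝ≥0∞) :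
    C ≤ ∫⁻ ξ in Icc (0:ℝ) 1, Fppow1 p Γ ξ := by
  have h1 : ∫⁻ ξ in Ioo a b, Fppow1 p Γ ξ = ⊤ := by
    rw [setLIntegral_congr_fun measurableSet_Ioo h, setLIntegral_const,
      ENNReal.top_mul]
    rw [Real.volume_Ioo]
    simp [ENNReal.ofReal_eq_zero]
    linarith
  exact le_top.trans ((h1.symm.le).trans (lintegral_mono_set hsub))

lemma Fppow1_top_of_empty {p : ℝ} (ξ : ℝ) : Fppow1 p (∅ : Finset ℝ) ξ = ⊤ := by
  rw [Fppow1, sInf_eq_top]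
  rintro a ⟨w, _, _, hsum, _, rfl⟩
  simp at hsum

lemma lower_main {p : ℝ} (hp : 1 ≤ p) {n : ℕ} (hn : 2 ≤ n) (Γ : Finset ℝ) (hΓ : Γ.card ≤ n) :
    ENNReal.ofReal ((2 / ((p + 1) * (p + 2))) * (((n : ℝ) - 1)⁻¹) ^ p)
      ≤ ∫⁻ ξ in Icc (0:ℝ) 1, Fppow1 p Γ ξ := by
  have hD : (0:ℝ) < (p + 1) * (p + 2) := by nlinarith
  have hn1 : (0:ℝ) < (n:ℝ) - 1 := by
    have : (2:ℝ) ≤ (n:ℝ) := by exact_mod_cast hn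
    linarith
  rcases Finset.eq_empty_or_nonempty Γ with rfl | hne
  · exact le_lintegral_of_top one_pos Ioo_subset_Icc_self
      (fun ξ _ => Fppow1_top_of_empty ξ) _
  by_cases h0 : ∃ x ∈ Γ, x ≤ 0
  swap
  · -- all grid points are `> 0`; no admissible weights left of the minimum
    push_neg at h0
    set m := Γ.min' hne with hm
    have hm0 : 0 < m := h0 _ (Γ.min'_mem hne)
    have hb : 0 < min m 1 := lt_min hm0 one_pos
    refine le_lintegral_of_top hb (fun x hx => ⟨hx.1.le, hx.2.le.trans (min_le_right _ _)⟩)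
      (fun ξ hξ => ?_) _
    rw [Fppow1, sInf_eq_top]
    rintro a ⟨w, hw0, _, hsum, hbar, rfl⟩
    exfalso
    have key : ∀ x ∈ Γ, w x * m ≤ w x * x := fun x hx =>
      mul_le_mul_of_nonneg_left (Γ.min'_le x hx) (hw0 x hx)
    have hsum2 : m ≤ ∑ x ∈ Γ, w x * x := by
      calc m = (∑ x ∈ Γ, w x) * m := by rw [hsum, one_mul]
        _ = ∑ x ∈ Γ, w x * m := by rw [Finset.sum_mul]
        _ ≤ ∑ x ∈ Γ, w x * x := Finset.sum_le_sum key
    rw [hbar] at hsum2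
    have := hξ.2
    have := min_le_left m 1
    linarith [hξ.2, min_le_left m 1]
  by_cases h1 : ∃ x ∈ Γ, (1:ℝ) ≤ x
  swap
  · -- all grid points are `< 1`
    push_neg at h1
    set M := Γ.max' hne with hM
    have hM1 : M < 1 := h1 _ (Γ.max'_mem hne)
    have ha : max M 0 < 1 := by
      rcases max_cases M 0 with ⟨h, _⟩ | ⟨h, _⟩ <;> rw [h] <;> [exact hM1; exact one_pos]
    refine le_lintegral_of_top ha
      (fun x hx => ⟨(le_max_right M 0).trans hx.1.le, hx.2.le⟩) (fun ξ hξ => ?_) _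
    rw [Fppow1, sInf_eq_top]
    rintro a ⟨w, hw0, _, hsum, hbar, rfl⟩
    exfalso
    have key : ∀ x ∈ Γ, w x * x ≤ w x * M := fun x hx =>
      mul_le_mul_of_nonneg_left (Γ.le_max' x hx) (hw0 x hx)
    have hsum2 : (∑ x ∈ Γ, w x * x) ≤ M := by
      calc (∑ x ∈ Γ, w x * x) ≤ ∑ x ∈ Γ, w x * M := Finset.sum_le_sum key
        _ = (∑ x ∈ Γ, w x) * M := by rw [Finset.sum_mul]
        _ = M := by rw [hsum, one_mul]
    rw [hbar] at hsum2
    linarith [hξ.1, le_max_left M 0]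
  -- main case
  obtain ⟨x0, hx0Γ, hx0⟩ := h0
  obtain ⟨x1, hx1Γ, hx1⟩ := h1
  have hne01 : x1 ≠ x0 := by intro h; rw [h] at hx1; linarith
  set k := (Γ.filter (fun x => x ∈ Ioo (0:ℝ) 1)).card with hk
  have hkn : k + 2 ≤ n := by
    have hsub : Γ.filter (fun x => x ∈ Ioo (0:ℝ) 1) ⊆ (Γ.erase x0).erase x1 := by
      intro x hx
      rw [Finset.mem_filter, mem_Ioo] at hx
      refine Finset.mem_erase.2 ⟨?_, Finset.mem_erase.2 ⟨?_, hx.1⟩⟩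
      · intro h; rw [h] at hx; linarith [hx.2.2]
      · intro h; rw [h] at hx; linarith [hx.2.1]
    have hcard2 : ((Γ.erase x0).erase x1).card = Γ.card - 2 := by
      rw [Finset.card_erase_of_mem (Finset.mem_erase.2 ⟨hne01, hx1Γ⟩),
        Finset.card_erase_of_mem hx0Γ]
      omega
    have := Finset.card_le_card hsub
    rw [hcard2] at this
    have hcard3 : 2 ≤ Γ.card := by
      have : x1 ∈ Γ.erase x0 := Finset.mem_erase.2 ⟨hne01, hx1Γ⟩
      have h4 := Finset.card_erase_of_mem hx0Γ
      have h5 := Finset.card_pos.2 ⟨x1, this⟩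
      omega
    omega
  have hlow := lower_int hp k Γ 0 1 one_pos rfl
  have hconst : ENNReal.ofReal ((2 / ((p + 1) * (p + 2))) * (((n : ℝ) - 1)⁻¹) ^ p)
      ≤ ENNReal.ofReal (2 * ((1:ℝ) - 0) ^ (p + 1) / ((p + 1) * (p + 2) * ((k : ℝ) + 1) ^ p)) := by
    apply ENNReal.ofReal_le_ofReal
    rw [sub_zero, Real.one_rpow, Real.inv_rpow hn1.le]
    have hkpos : (0:ℝ) < (k:ℝ) + 1 := by positivity
    have hle : (k:ℝ) + 1 ≤ (n:ℝ) - 1 := by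
      have : (k:ℝ) + 2 ≤ (n:ℝ) := by exact_mod_cast hkn
      linarith
    have hrle : ((k:ℝ) + 1) ^ p ≤ ((n:ℝ) - 1) ^ p :=
      Real.rpow_le_rpow hkpos.le hle (by linarith)
    have hkp : (0:ℝ) < ((k:ℝ) + 1) ^ p := Real.rpow_pos_of_pos hkpos p
    have hnp : (0:ℝ) < ((n:ℝ) - 1) ^ p := Real.rpow_pos_of_pos hn1 p
    rw [div_mul_eq_mul_div, div_le_div_iff₀ (by positivity) (by positivity)]
    have hinv : (((n:ℝ) - 1) ^ p)⁻¹ * (((k:ℝ) + 1) ^ p) ≤ 1 := by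
      rw [inv_mul_le_iff₀ hnp, mul_one]
      exact hrle
    nlinarith [mul_le_mul_of_nonneg_left hinv hD.le]
  exact hconst.trans (hlow.trans (lintegral_mono_set Ioo_subset_Icc_self))
lemma upper_main {p : ℝ} (hp : 1 ≤ p) {n : ℕ} (hn : 2 ≤ n) :
    ∫⁻ ξ in Icc (0:ℝ) 1, Fppow1 p ((Finset.range n).image fun i => (i:ℝ)/((n:ℝ)-1)) ξ
      ≤ ENNReal.ofReal ((2 / ((p + 1) * (p + 2))) * (((n : ℝ) - 1)⁻¹) ^ p) := by
  have hD : (0:ℝ) < (p + 1) * (p + 2) := by nlinarith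
  have hn1 : (0:ℝ) < (n:ℝ) - 1 := by
    have : (2:ℝ) ≤ (n:ℝ) := by exact_mod_cast hn
    linarith
  set Γn := (Finset.range n).image fun i => (i:ℝ)/((n:ℝ)-1) with hΓn
  have piece : ∀ j : ℕ, j ≤ n - 1 →
      ∫⁻ ξ in Icc (0:ℝ) ((j:ℝ)/((n:ℝ)-1)), Fppow1 p Γn ξ
        ≤ (j : ℝ≥0∞) * ENNReal.ofReal (2 * (((n:ℝ)-1)⁻¹) ^ (p+1) / ((p+1)*(p+2))) := by
    intro j
    induction j with
    | zero =>
      intro _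
      simp only [Nat.cast_zero, zero_div, Icc_self]
      rw [setLIntegral_measure_zero _ _ Real.volume_singleton]
      simp
    | succ j ihj =>
      intro hj1
      have hj : j ≤ n - 1 := by omega
      have hjn : j < n := by omega
      have hjn' : j + 1 < n := by omega
      have hu0 : (0:ℝ) ≤ (j:ℝ)/((n:ℝ)-1) := by positivity
      have huv : (j:ℝ)/((n:ℝ)-1) < ((j:ℝ)+1)/((n:ℝ)-1) :=
        (div_lt_div_iff_of_pos_right hn1).2 (by linarith)
      have hmem_u : (j:ℝ)/((n:ℝ)-1) ∈ Γn := by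
        rw [hΓn]
        simp only [Finset.mem_image, bind_pure_comp, Finset.fmap_def, Finset.mem_range]
        exact ⟨(j:ℝ), ⟨j, hjn, rfl⟩, rfl⟩
      have hmem_v : ((j:ℝ)+1)/((n:ℝ)-1) ∈ Γn := by
        rw [hΓn]
        simp only [Finset.mem_image, bind_pure_comp, Finset.fmap_def, Finset.mem_range]
        exact ⟨(j:ℝ)+1, ⟨j + 1, hjn', by push_cast; ring⟩, rfl⟩
      have hdiff : ((j:ℝ)+1)/((n:ℝ)-1) - (j:ℝ)/((n:ℝ)-1) = ((n:ℝ)-1)⁻¹ := by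
        field_simp
        ring
      have hdisj : Disjoint (Icc (0:ℝ) ((j:ℝ)/((n:ℝ)-1)))
          (Ioc ((j:ℝ)/((n:ℝ)-1)) (((j:ℝ)+1)/((n:ℝ)-1))) := by
        rw [Set.disjoint_left]
        rintro x ⟨_, h1⟩ ⟨h2, _⟩
        exact absurd h1 (not_le.2 h2)
      have hIoc : ∫⁻ ξ in Ioc ((j:ℝ)/((n:ℝ)-1)) (((j:ℝ)+1)/((n:ℝ)-1)), Fppow1 p Γn ξ
          ≤ ENNReal.ofReal (2 * (((n:ℝ)-1)⁻¹) ^ (p+1) / ((p+1)*(p+2))) := by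
        calc ∫⁻ ξ in Ioc ((j:ℝ)/((n:ℝ)-1)) (((j:ℝ)+1)/((n:ℝ)-1)), Fppow1 p Γn ξ
            ≤ ∫⁻ ξ in Ioc ((j:ℝ)/((n:ℝ)-1)) (((j:ℝ)+1)/((n:ℝ)-1)),
              ENNReal.ofReal (lineF p ((j:ℝ)/((n:ℝ)-1)) (((j:ℝ)+1)/((n:ℝ)-1)) ξ ξ) := by
              refine lintegral_mono_ae ((ae_restrict_iff' measurableSet_Ioc).2
                (ae_of_all _ fun ξ hξ => ?_))
              exact Fppow1_le_lineF hmem_u hmem_v huv ⟨hξ.1.le, hξ.2⟩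
          _ = ∫⁻ ξ in Ioo ((j:ℝ)/((n:ℝ)-1)) (((j:ℝ)+1)/((n:ℝ)-1)),
              ENNReal.ofReal (lineF p ((j:ℝ)/((n:ℝ)-1)) (((j:ℝ)+1)/((n:ℝ)-1)) ξ ξ) := by
              rw [← Measure.restrict_congr_set Ioo_ae_eq_Ioc]
          _ = ENNReal.ofReal (2 * (((n:ℝ)-1)⁻¹) ^ (p+1) / ((p+1)*(p+2))) := by
              rw [lintegral_chord hp huv, hdiff]
      calc ∫⁻ ξ in Icc (0:ℝ) (((j+1:ℕ):ℝ)/((n:ℝ)-1)), Fppow1 p Γn ξ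
          = (∫⁻ ξ in Icc (0:ℝ) ((j:ℝ)/((n:ℝ)-1)), Fppow1 p Γn ξ)
            + ∫⁻ ξ in Ioc ((j:ℝ)/((n:ℝ)-1)) (((j:ℝ)+1)/((n:ℝ)-1)), Fppow1 p Γn ξ := by
            rw [show (((j+1:ℕ):ℝ))/((n:ℝ)-1) = ((j:ℝ)+1)/((n:ℝ)-1) by push_cast; ring,
              ← lintegral_union measurableSet_Ioc hdisj,
              Icc_union_Ioc_eq_Icc hu0 huv.le]
        _ ≤ (j : ℝ≥0∞) * ENNReal.ofReal (2 * (((n:ℝ)-1)⁻¹) ^ (p+1) / ((p+1)*(p+2)))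
            + ENNReal.ofReal (2 * (((n:ℝ)-1)⁻¹) ^ (p+1) / ((p+1)*(p+2))) :=
            add_le_add (ihj hj) hIoc
        _ = ((j+1 : ℕ) : ℝ≥0∞) * ENNReal.ofReal (2 * (((n:ℝ)-1)⁻¹) ^ (p+1) / ((p+1)*(p+2))) := by
            push_cast
            ring
  have hfin := piece (n - 1) le_rfl
  have hcast : (((n - 1 : ℕ)):ℝ) = (n:ℝ) - 1 := by
    rw [Nat.cast_sub (by omega)]
    norm_num
  rw [hcast, div_self hn1.ne'] at hfin
  refine hfin.trans (le_of_eq ?_)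
  rw [show ((n - 1 : ℕ) : ℝ≥0∞) = ENNReal.ofReal (((n - 1:ℕ)):ℝ) from
    (ENNReal.ofReal_natCast _).symm, hcast,
    ← ENNReal.ofReal_mul (by linarith)]
  congr 1
  rw [rpow_succ2 (by positivity) p (by linarith)]
  field_simp
/-- exact rate for the uniform distribution on `[0,1]`:
for `n ≥ 2`, `d_{n,p}(U([0,1])) = (2/((p+1)(p+2)))^{1/p} (n-1)⁻¹` (stated at the
level of `p`-th powers), and consequently
`Q^{dq}_{|·|,p,1} = lim_n n d_{n,p}(U([0,1])) = (2/((p+1)(p+2)))^{1/p}`. -/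
theorem dnp_unif01_formula (p : ℝ) (hp : 1 ≤ p) :
    (∀ n : ℕ, 2 ≤ n →
      dnpPow1 n p (volume.restrict (Set.Icc (0 : ℝ) 1)) =
        ENNReal.ofReal ((2 / ((p + 1) * (p + 2))) * (((n : ℝ) - 1)⁻¹) ^ p)) ∧
    Tendsto
      (fun n : ℕ => (n : ℝ) *
        ((dnpPow1 n p (volume.restrict (Set.Icc (0 : ℝ) 1))).toReal) ^ (1 / p))
      atTop
      (nhds ((2 / ((p + 1) * (p + 2))) ^ (1 / p))) := by
  have hD : (0:ℝ) < (p + 1) * (p + 2) := by nlinarith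
  have hC : (0:ℝ) ≤ 2 / ((p + 1) * (p + 2)) := by positivity
  have hp0 : (0:ℝ) < p := by linarith
  have key : ∀ n : ℕ, 2 ≤ n →
      dnpPow1 n p (volume.restrict (Set.Icc (0 : ℝ) 1)) =
        ENNReal.ofReal ((2 / ((p + 1) * (p + 2))) * (((n : ℝ) - 1)⁻¹) ^ p) := by
    intro n hn
    apply le_antisymm
    · have hcard : ((Finset.range n).image fun i => (i:ℝ)/((n:ℝ)-1)).card ≤ n := by
        apply le_trans (Finset.card_image_le)
        simp only [bind_pure_comp, Finset.fmap_def]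
        exact le_trans (Finset.card_image_le) (by simp)
      exact iInf_le_of_le _ (iInf_le_of_le hcard (upper_main hp hn))
    · exact le_iInf fun Γ => le_iInf fun hΓ => lower_main hp hn Γ hΓ
  refine ⟨key, ?_⟩
  have hev : ∀ᶠ n : ℕ in atTop,
      (2 / ((p + 1) * (p + 2))) ^ (1/p) * ((n:ℝ) * ((n:ℝ) - 1)⁻¹)
        = (n : ℝ) * ((dnpPow1 n p (volume.restrict (Set.Icc (0 : ℝ) 1))).toReal) ^ (1 / p) := by
    filter_upwards [eventually_ge_atTop 2] with n hn
    have hn1 : (0:ℝ) < (n:ℝ) - 1 := by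
      have : (2:ℝ) ≤ (n:ℝ) := by exact_mod_cast hn
      linarith
    rw [key n hn,
      ENNReal.toReal_ofReal (mul_nonneg hC (Real.rpow_nonneg (by positivity) p)),
      Real.mul_rpow hC (Real.rpow_nonneg (by positivity) p),
      ← Real.rpow_mul (by positivity), mul_one_div, div_self hp0.ne', Real.rpow_one]
    ring
  have laux : Tendsto (fun n : ℕ => (n:ℝ) * ((n:ℝ) - 1)⁻¹) atTop (nhds 1) := by
    have l1 : Tendsto (fun x : ℝ => x - 1) atTop atTop :=
      tendsto_atTop_add_const_right _ _ tendsto_id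
    have l2 : Tendsto (fun n : ℕ => ((n:ℝ) - 1)⁻¹) atTop (nhds 0) :=
      (l1.comp tendsto_natCast_atTop_atTop).inv_tendsto_atTop
    have l3 : Tendsto (fun n : ℕ => 1 + ((n:ℝ) - 1)⁻¹) atTop (nhds 1) := by
      simpa using tendsto_const_nhds.add l2
    refine l3.congr' ?_
    filter_upwards [eventually_ge_atTop 2] with n hn
    have hn1 : (0:ℝ) < (n:ℝ) - 1 := by
      have : (2:ℝ) ≤ (n:ℝ) := by exact_mod_cast hn
      linarith
    field_simp
    ring
  have final : Tendsto (fun n : ℕ =>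
      (2 / ((p + 1) * (p + 2))) ^ (1/p) * ((n:ℝ) * ((n:ℝ) - 1)⁻¹)) atTop
      (nhds ((2 / ((p + 1) * (p + 2))) ^ (1/p))) := by
    have := (tendsto_const_nhds (x := (2 / ((p + 1) * (p + 2))) ^ (1/p)) (f := atTop)).mul laux
    simpa using this
  exact final.congr' hev
end
end

section
/- Let p, η > 0. There exist a constant C_{p,η} > 0 and an integer n_{p,η} ≥ 1 such that for every real random variable X ∈ L^{p+η}: for all n ≥ n_{p,η}, inf over ordered n-tuples x₁ ≤ … ≤ x_n of E[A_{p,n}(x₁,…,x_n,X)^p]^{1/p} ≤ C_{p,η} · ‖X‖_{L^{p+η}} · n^{−1}, where A_{p,n}(x₁,…,x_n,ξ)^p = Σ_{i=1}^{n−1} (x_{i+1}−x_i)^p 1_{{xᵢ ≤ ξ < x_{i+1}}} + (ξ−x_n)^p 1_{{ξ ≥ x_n}} + (x₁−ξ)^p 1_{{ξ < x₁}}. (Extended Pierce Lemma in dimension one.) -/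
open MeasureTheory ENNReal Filter

noncomputable section

/-- `A_{p,n}(x,ξ)^p`, where `x : ℕ → ℝ` encodes the ordered `n`-tuple
`x 0 ≤ x 1 ≤ … ≤ x (n-1)` (0-indexed version of the paper's `x₁ ≤ … ≤ x_n`):
`Σ_{i=1}^{n-1} (x_{i+1}-x_i)^p 1_{x_i ≤ ξ < x_{i+1}} + (ξ-x_n)^p 1_{ξ ≥ x_n}
  + (x₁-ξ)^p 1_{ξ < x₁}`. -/
def Apow (p : ℝ) (n : ℕ) (x : ℕ → ℝ) (ξ : ℝ) : ℝ :=
  (∑ i ∈ Finset.range (n - 1),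
      if x i ≤ ξ ∧ ξ < x (i + 1) then (x (i + 1) - x i) ^ p else 0) +
    (if x (n - 1) ≤ ξ then (ξ - x (n - 1)) ^ p else 0) +
    (if ξ < x 0 then (x 0 - ξ) ^ p else 0)

namespace PierceAux

lemma core_ineq {β a : ℝ} (hβ : 0 < β) (ha : 2 ≤ a) :
    (a - 1) ^ (-β) - a ^ (-β) ≤ β * 2 ^ (β + 1) * a ^ (-β - 1) := by
  have h1 : (1:ℝ) ≤ a - 1 := by linarith
  have h0 : (0:ℝ) < a - 1 := by linarith
  have hlt : a - 1 < a := by linarith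
  have hcont : ContinuousOn (fun t : ℝ => t ^ (-β)) (Set.Icc (a-1) a) := by
    apply ContinuousOn.rpow_const continuousOn_id
    intro t ht
    exact Or.inl (by nlinarith [ht.1] : t ≠ 0)
  have hderiv : ∀ t ∈ Set.Ioo (a-1) a, HasDerivAt (fun t : ℝ => t ^ (-β))
      ((-β) * t ^ (-β - 1)) t := by
    intro t ht
    exact Real.hasDerivAt_rpow_const (Or.inl (by nlinarith [ht.1] : t ≠ 0))
  obtain ⟨c, hc, hceq⟩ := exists_hasDerivAt_eq_slope (fun t : ℝ => t ^ (-β))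
    (fun t => (-β) * t ^ (-β - 1)) hlt hcont hderiv
  have hc0 : 0 < c := lt_trans h0 hc.1
  have hslope : (a:ℝ) - (a - 1) = 1 := by ring
  rw [hslope, div_one] at hceq
  have key : (a - 1) ^ (-β) - a ^ (-β) = β * c ^ (-β - 1) := by
    have := hceq
    nlinarith [this]
  rw [key]
  have hc1 : c ^ (-β - 1) ≤ (a - 1) ^ (-β - 1) :=
    Real.rpow_le_rpow_of_nonpos h0 hc.1.le (by linarith)
  have hhalf : a / 2 ≤ a - 1 := by linarith
  have h2 : (a - 1) ^ (-β - 1) ≤ (a / 2) ^ (-β - 1) :=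
    Real.rpow_le_rpow_of_nonpos (by linarith) hhalf (by linarith)
  have h3 : (a / 2) ^ (-β - 1) = 2 ^ (β + 1) * a ^ (-β - 1) := by
    rw [Real.div_rpow (by linarith) (by norm_num)]
    rw [show (-β - 1) = -(β+1) by ring, Real.rpow_neg (by norm_num : (0:ℝ) ≤ 2)]
    field_simp
  calc β * c ^ (-β - 1) ≤ β * ((a/2) ^ (-β - 1)) := by
        apply mul_le_mul_of_nonneg_left (le_trans hc1 h2) hβ.le
    _ = β * 2 ^ (β + 1) * a ^ (-β - 1) := by rw [h3]; ring

/-- the nonuniform grid values -/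
def gfun (β s : ℝ) (m j : ℕ) : ℝ :=
  s * ((m + 1 : ℕ) : ℝ) ^ β * (((m + 1 - j : ℕ) : ℝ)) ^ (-β)

lemma Mpos (m : ℕ) : (0:ℝ) < ((m + 1 : ℕ) : ℝ) := by positivity

lemma gfun_zero {β s : ℝ} {m : ℕ} : gfun β s m 0 = s := by
  unfold gfun
  rw [Nat.sub_zero, mul_assoc, ← Real.rpow_add (Mpos m), add_neg_cancel,
    Real.rpow_zero, mul_one]

lemma gfun_top {β s : ℝ} {m : ℕ} : gfun β s m m = s * ((m + 1 : ℕ) : ℝ) ^ β := by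
  unfold gfun
  rw [show m + 1 - m = 1 by omega]
  norm_num

lemma base_pos {m j : ℕ} (hj : j ≤ m) : (0:ℝ) < ((m + 1 - j : ℕ) : ℝ) := by
  have : 1 ≤ m + 1 - j := by omega
  exact_mod_cast Nat.lt_of_lt_of_le Nat.zero_lt_one this

lemma gfun_pos {β s : ℝ} {m j : ℕ} (hs : 0 < s) (hj : j ≤ m) : 0 < gfun β s m j := by
  unfold gfun
  have := base_pos (m := m) hj
  positivity

lemma gfun_mono {β s : ℝ} {m j k : ℕ} (hβ : 0 < β) (hs : 0 < s) (hjk : j ≤ k)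
    (hk : k ≤ m) : gfun β s m j ≤ gfun β s m k := by
  unfold gfun
  apply mul_le_mul_of_nonneg_left _ (by positivity)
  exact Real.rpow_le_rpow_of_nonpos (base_pos hk)
    (by exact_mod_cast Nat.cast_le.mpr (by omega : m + 1 - k ≤ m + 1 - j)) (by linarith)

lemma s_le_gfun {β s : ℝ} {m j : ℕ} (hβ : 0 < β) (hs : 0 < s) (hj : j ≤ m) :
    s ≤ gfun β s m j := by
  have := gfun_mono (β := β) hβ hs (Nat.zero_le j) hj
  rwa [gfun_zero] at this

/-- the key gap estimate for the nonuniform grid. -/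
lemma gap_le {β s : ℝ} {m j : ℕ} (hβ : 0 < β) (hs : 0 < s) (hm : 1 ≤ m) (hj : j < m) :
    gfun β s m (j + 1) - gfun β s m j ≤
      (β * 2 ^ (β + 1) / m) * s ^ (-1/β) * (gfun β s m j) ^ (1 + 1/β) := by
  set M : ℝ := ((m + 1 : ℕ) : ℝ) with hM
  have hM0 : 0 < M := Mpos m
  have hmM : (m : ℝ) ≤ M := by rw [hM]; exact_mod_cast Nat.le_succ m
  set a : ℝ := ((m + 1 - j : ℕ) : ℝ) with ha
  have ha2 : 2 ≤ a := by rw [ha]; exact_mod_cast (by omega : 2 ≤ m + 1 - j)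
  have hb : ((m + 1 - (j+1) : ℕ) : ℝ) = a - 1 := by
    rw [ha]
    have : m + 1 - (j + 1) + 1 = m + 1 - j := by omega
    push_cast [← this]
    ring
  have hgj : gfun β s m j = s * M ^ β * a ^ (-β) := rfl
  have hgj1 : gfun β s m (j+1) = s * M ^ β * (a - 1) ^ (-β) := by
    unfold gfun; rw [hb]
  have hcore := core_ineq hβ ha2
  have step1 : gfun β s m (j + 1) - gfun β s m j ≤
      s * M ^ β * (β * 2 ^ (β + 1) * a ^ (-β - 1)) := by
    rw [hgj, hgj1, ← mul_sub]
    apply mul_le_mul_of_nonneg_left hcore (by positivity)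
  refine le_trans step1 ?_
  -- RHS equals (β 2^{β+1}/m) s M^{β+1} a^{-β-1}
  have hgpow : (gfun β s m j) ^ (1 + 1/β) =
      s ^ (1 + 1/β) * M ^ (β + 1) * a ^ (-β - 1) := by
    rw [hgj, Real.mul_rpow (by positivity) (by positivity),
      Real.mul_rpow (by positivity) (by positivity),
      ← Real.rpow_mul hM0.le, ← Real.rpow_mul (by linarith : (0:ℝ) ≤ a),
      show β * (1 + 1 / β) = β + 1 by field_simp,
      show (-β) * (1 + 1 / β) = -β - 1 by field_simp; ring]
  have hexp : s ^ (-1/β) * s ^ (1 + 1/β) = s := by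
    rw [← Real.rpow_add hs]
    ring_nf
    rw [Real.rpow_one]
  have hG : (β * 2 ^ (β + 1) / (m:ℝ)) * s ^ (-1/β) * (gfun β s m j) ^ (1 + 1/β)
      = (β * 2 ^ (β + 1) / (m:ℝ)) * (s * (M ^ (β+1) * a ^ (-β-1))) := by
    rw [hgpow]
    linear_combination (β * 2 ^ (β + 1) / (m:ℝ)) * (M ^ (β+1) * a ^ (-β-1)) * hexp
  have hMβ1 : M ^ (β + 1) = M ^ β * M := by rw [Real.rpow_add hM0, Real.rpow_one]
  have hm0 : (0:ℝ) < m := by exact_mod_cast hm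
  have hMm : 1 ≤ M / (m:ℝ) := (one_le_div hm0).mpr hmM
  have hApos : 0 < a ^ (-β - 1) := Real.rpow_pos_of_pos (by linarith) _
  have hWpos : 0 < M ^ β := Real.rpow_pos_of_pos hM0 _
  rw [hG, hMβ1]
  have hre : s * M ^ β * (β * 2 ^ (β + 1) * a ^ (-β - 1)) * (M / (m:ℝ))
      = β * 2 ^ (β + 1) / (m:ℝ) * (s * (M ^ β * M * a ^ (-β - 1))) := by
    field_simp
  rw [← hre]
  exact le_mul_of_one_le_right (by positivity) hMm

/-- the full grid: nonuniform negative part, uniform middle part, nonuniform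
positive part, then constant. -/
def grid (β s : ℝ) (m : ℕ) : ℕ → ℝ := fun i =>
  if i ≤ m then -(gfun β s m (m - i))
  else if i ≤ 3*m then -s + ((i - m : ℕ) : ℝ) * (s/m)
  else gfun β s m (min (i - 3*m) m)

lemma grid_lo {β s : ℝ} {m i : ℕ} (h : i ≤ m) :
    grid β s m i = -(gfun β s m (m - i)) := if_pos h

lemma grid_mid {β s : ℝ} {m i : ℕ} (h1 : m ≤ i) (h2 : i ≤ 3*m) :
    grid β s m i = -s + ((i - m : ℕ) : ℝ) * (s/m) := by
  rcases eq_or_lt_of_le h1 with h | h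
  · rw [grid_lo (by omega : i ≤ m), ← h]
    simp [gfun_zero]
  · unfold grid
    rw [if_neg (by omega), if_pos h2]

lemma grid_hi {β s : ℝ} {m i : ℕ} (hs : 0 < s) (hm : 1 ≤ m) (h : 3*m ≤ i) :
    grid β s m i = gfun β s m (min (i - 3*m) m) := by
  rcases eq_or_lt_of_le h with h' | h'
  · rw [grid_mid (by omega) (by omega), ← h']
    have hm0 : (m:ℝ) ≠ 0 := by positivity
    rw [show 3*m - m = 2*m by omega, show min (3*m - 3*m) m = 0 by omega, gfun_zero]
    push_cast
    field_simp
    ring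
  · unfold grid
    rw [if_neg (by omega), if_neg (by omega)]

lemma grid_mono {β s : ℝ} {m : ℕ} (hβ : 0 < β) (hs : 0 < s) (hm : 1 ≤ m) :
    Monotone (grid β s m) := by
  apply monotone_nat_of_le_succ
  intro i
  rcases le_or_gt (i+1) m with h | h
  · rw [grid_lo (by omega), grid_lo h]
    apply neg_le_neg
    exact gfun_mono hβ hs (by omega) (by omega)
  · rcases le_or_gt (i+1) (3*m) with h2 | h2
    · rw [grid_mid (by omega) (by omega), grid_mid (by omega) h2]
      have : ((i + 1 - m : ℕ) : ℝ) = ((i - m : ℕ) : ℝ) + 1 := by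
        have : i + 1 - m = (i - m) + 1 := by omega
        rw [this]; push_cast; ring
      rw [this]
      have hsm : 0 ≤ s / m := by positivity
      nlinarith
    · rw [grid_hi hs hm (by omega), grid_hi hs hm (by omega)]
      exact gfun_mono hβ hs (by omega) (by omega)

/-- bound for a non-uniform interval term. -/
lemma nonuni_term {p η s : ℝ} (hp : 0 < p) (hη : 0 < η) (hs : 0 < s) {m j : ℕ}
    (hm : 1 ≤ m) (hj : j < m) {t : ℝ} (ht : gfun (p/η) s m j ≤ t) :
    (gfun (p/η) s m (j+1) - gfun (p/η) s m j) ^ p ≤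
      ((p/η) * 2 ^ ((p/η) + 1) / m) ^ p * (s ^ (-η) * t ^ (p+η)) := by
  have hβ : 0 < p/η := by positivity
  have hm0 : (0:ℝ) < m := by exact_mod_cast hm
  have hgap0 : 0 ≤ gfun (p/η) s m (j+1) - gfun (p/η) s m j :=
    sub_nonneg.mpr (gfun_mono hβ hs (Nat.le_succ j) hj)
  have hgpos : 0 < gfun (p/η) s m j := gfun_pos hs hj.le
  have hR0 : (0:ℝ) ≤ (p/η) * 2 ^ ((p/η) + 1) / m := by positivity
  have hstep := Real.rpow_le_rpow hgap0 (gap_le hβ hs hm hj) hp.le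
  refine le_trans hstep ?_
  rw [Real.mul_rpow (by positivity) (by positivity),
    Real.mul_rpow (by positivity) (by positivity),
    ← Real.rpow_mul hs.le, ← Real.rpow_mul hgpos.le,
    show (-1/(p/η)) * p = -η by field_simp,
    show (1 + 1/(p/η)) * p = p + η by field_simp, mul_assoc]
  apply mul_le_mul_of_nonneg_left _ (by positivity)
  apply mul_le_mul_of_nonneg_left _ (by positivity)
  exact Real.rpow_le_rpow hgpos.le ht (by positivity)

/-- bound for the tail terms. -/
lemma tail_term {p η s : ℝ} (hp : 0 < p) (hη : 0 < η) (hs : 0 < s) {m : ℕ}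
    (hm : 1 ≤ m) {t : ℝ} (ht : s * ((m:ℝ)) ^ (p/η) ≤ t) :
    t ^ p ≤ (1/(m:ℝ)) ^ p * (s ^ (-η) * t ^ (p+η)) := by
  have hm0 : (0:ℝ) < m := by exact_mod_cast hm
  have ht0 : (0:ℝ) < t := lt_of_lt_of_le (by positivity) ht
  have h1 : (s * ((m:ℝ)) ^ (p/η)) ^ η ≤ t ^ η :=
    Real.rpow_le_rpow (by positivity) ht hη.le
  have h2 : (s * ((m:ℝ)) ^ (p/η)) ^ η = s ^ η * ((m:ℝ)) ^ p := by
    rw [Real.mul_rpow hs.le (by positivity), ← Real.rpow_mul hm0.le,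
      show (p/η) * η = p by field_simp]
  rw [h2] at h1
  have hss : s ^ (-η) * s ^ η = 1 := by
    rw [← Real.rpow_add hs]
    norm_num
  have hmm : (1/(m:ℝ)) ^ p * ((m:ℝ)) ^ p = 1 := by
    rw [← Real.mul_rpow (by positivity) (by positivity), one_div_mul_cancel hm0.ne',
      Real.one_rpow]
  have hts : t ^ (p + η) = t ^ p * t ^ η := Real.rpow_add ht0 p η
  rw [hts]
  calc t ^ p = ((1/(m:ℝ)) ^ p * ((m:ℝ)) ^ p) * (s ^ (-η) * s ^ η) * t ^ p := by
        rw [hmm, hss]; ring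
    _ = (1/(m:ℝ)) ^ p * (s ^ (-η) * (t ^ p * (s ^ η * ((m:ℝ)) ^ p))) := by ring
    _ ≤ (1/(m:ℝ)) ^ p * (s ^ (-η) * (t ^ p * t ^ η)) := by
        apply mul_le_mul_of_nonneg_left _ (by positivity)
        apply mul_le_mul_of_nonneg_left _ (by positivity)
        exact mul_le_mul_of_nonneg_left h1 (by positivity)

lemma tail_term' {p η s : ℝ} (hp : 0 < p) (hη : 0 < η) (hs : 0 < s) {m : ℕ}
    (hm : 1 ≤ m) {t : ℝ} (ht : gfun (p/η) s m m ≤ t) :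
    (t - gfun (p/η) s m m) ^ p ≤ (1/(m:ℝ)) ^ p * (s ^ (-η) * t ^ (p+η)) := by
  have hg0 : 0 < gfun (p/η) s m m := gfun_pos hs le_rfl
  have h0 : (t - gfun (p/η) s m m) ^ p ≤ t ^ p :=
    Real.rpow_le_rpow (sub_nonneg.mpr ht) (by linarith) hp.le
  refine le_trans h0 (tail_term hp hη hs hm ?_)
  calc s * ((m:ℝ)) ^ (p/η) ≤ s * (((m+1:ℕ)):ℝ) ^ (p/η) := by
        apply mul_le_mul_of_nonneg_left _ hs.le
        exact Real.rpow_le_rpow (Nat.cast_nonneg m) (by exact_mod_cast Nat.le_succ m)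
          (by positivity)
    _ = gfun (p/η) s m m := gfun_top.symm
    _ ≤ t := ht

/-- The pointwise bound: on the grid, `A_{p,n}^p` is dominated by
`C/m^p (s^p + s^{-η}|ξ|^{p+η})`. -/
lemma apow_pointwise {p η s : ℝ} (hp : 0 < p) (hη : 0 < η) (hs : 0 < s)
    {m n : ℕ} (hm : 1 ≤ m) (hn : 4*m < n) (ξ : ℝ) :
    Apow p n (grid (p/η) s m) ξ ≤
      3 * ((max 1 ((p/η) * 2 ^ ((p/η)+1)) / m) ^ p * s ^ p
        + (max 1 ((p/η) * 2 ^ ((p/η)+1)) / m) ^ p * (s ^ (-η) * |ξ| ^ (p+η))) := by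
  set β := p/η with hβdef
  have hβ : 0 < β := by positivity
  set D := max 1 (β * 2 ^ (β+1)) with hDdef
  have hD1 : (1:ℝ) ≤ D := le_max_left _ _
  have hDE : β * 2 ^ (β+1) ≤ D := le_max_right _ _
  have hm0 : (0:ℝ) < m := by exact_mod_cast hm
  set b := (D / m) ^ p * s ^ p + (D / m) ^ p * (s ^ (-η) * |ξ| ^ (p+η)) with hbdef
  have hb0 : 0 ≤ b := by positivity
  have habs : 0 ≤ |ξ| ^ (p+η) := by positivity
  have hs' : 0 ≤ s ^ (-η) := by positivity
  -- comparing prefactors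
  have hcmpE : (β * 2 ^ (β+1) / m) ^ p * (s ^ (-η) * |ξ| ^ (p+η)) ≤ b := by
    refine le_add_of_nonneg_of_le (by positivity) ?_
    apply mul_le_mul_of_nonneg_right _ (by positivity)
    exact Real.rpow_le_rpow (by positivity) (by gcongr) hp.le
  have hcmp1 : (1 / (m:ℝ)) ^ p * (s ^ (-η) * |ξ| ^ (p+η)) ≤ b := by
    refine le_add_of_nonneg_of_le (by positivity) ?_
    apply mul_le_mul_of_nonneg_right _ (by positivity)
    exact Real.rpow_le_rpow (by positivity) (by gcongr) hp.le
  -- claim A: each active interval term is at most b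
  have claimA : ∀ i, grid β s m i ≤ ξ → ξ < grid β s m (i+1) →
      (grid β s m (i+1) - grid β s m i) ^ p ≤ b := by
    intro i hle hlt
    rcases lt_or_ge i m with h1 | h1
    · -- nonuniform negative part
      set j := m - (i+1) with hjdef
      have hjm : j < m := by omega
      have e1 : grid β s m i = -(gfun β s m (j+1)) := by
        rw [grid_lo h1.le, show m - i = j + 1 by omega]
      have e2 : grid β s m (i+1) = -(gfun β s m j) := by
        rw [grid_lo (by omega), hjdef]
      have ht : gfun β s m j ≤ |ξ| := by
        rw [e2] at hlt
        have := neg_le_abs ξ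
        linarith
      have : grid β s m (i+1) - grid β s m i = gfun β s m (j+1) - gfun β s m j := by
        rw [e1, e2]; ring
      rw [this]
      exact le_trans (nonuni_term hp hη hs hm hjm ht) hcmpE
    rcases lt_or_ge i (3*m) with h2 | h2
    · -- uniform part
      have e1 := grid_mid (β := β) (s := s) h1 h2.le
      have e2 := grid_mid (β := β) (s := s) (by omega : m ≤ i+1) (by omega : i+1 ≤ 3*m)
      have hcast : ((i + 1 - m : ℕ) : ℝ) = ((i - m : ℕ) : ℝ) + 1 := by
        rw [show i + 1 - m = (i - m) + 1 by omega]; push_cast; ring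
      have hgap : grid β s m (i+1) - grid β s m i = s / m := by
        rw [e1, e2, hcast]; ring
      rw [hgap]
      refine le_add_of_le_of_nonneg ?_ (by positivity)
      rw [← Real.mul_rpow (by positivity) hs.le]
      apply Real.rpow_le_rpow (by positivity) _ hp.le
      rw [div_mul_eq_mul_div]
      gcongr
      nlinarith
    · -- nonuniform positive part
      rcases lt_or_ge (i - 3*m) m with h3 | h3
      · set j := i - 3*m with hjdef
        have e1 : grid β s m i = gfun β s m j := by
          rw [grid_hi hs hm h2, min_eq_left h3.le]
        have e2 : grid β s m (i+1) = gfun β s m (j+1) := by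
          rw [grid_hi hs hm (by omega), show i + 1 - 3*m = j + 1 by omega,
            min_eq_left (by omega : j + 1 ≤ m)]
        have ht : gfun β s m j ≤ |ξ| := by
          rw [e1] at hle
          exact le_trans hle (le_abs_self ξ)
        rw [e1, e2]
        exact le_trans (nonuni_term hp hη hs hm h3 ht) hcmpE
      · have e1 : grid β s m i = gfun β s m m := by
          rw [grid_hi hs hm h2, min_eq_right h3]
        have e2 : grid β s m (i+1) = gfun β s m m := by
          rw [grid_hi hs hm (by omega), min_eq_right (by omega : m ≤ i + 1 - 3*m)]
        rw [e1, e2, sub_self, Real.zero_rpow hp.ne']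
        exact hb0
  -- the sum part
  have claimS : (∑ i ∈ Finset.range (n - 1),
      if grid β s m i ≤ ξ ∧ ξ < grid β s m (i + 1) then
        (grid β s m (i + 1) - grid β s m i) ^ p else 0) ≤ b := by
    by_cases hex : ∃ i ∈ Finset.range (n-1), grid β s m i ≤ ξ ∧ ξ < grid β s m (i+1)
    · obtain ⟨i₀, hmem, hc⟩ := hex
      rw [Finset.sum_eq_single_of_mem i₀ hmem ?side]
      · rw [if_pos hc]
        exact claimA i₀ hc.1 hc.2
      case side =>
        intro j hj hne
        rw [if_neg]
        intro hcj
        rcases lt_or_gt_of_ne hne with hlt | hgt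
        · have := grid_mono hβ hs hm (by omega : j + 1 ≤ i₀)
          have h1 := hc.1
          have h2 := hcj.2
          linarith
        · have := grid_mono hβ hs hm (by omega : i₀ + 1 ≤ j)
          have h1 := hcj.1
          have h2 := hc.2
          linarith
    · push_neg at hex
      rw [Finset.sum_eq_zero]
      · exact hb0
      intro j hj
      rw [if_neg]
      intro hcj
      exact absurd hcj.2 (not_lt.mpr ((hex j hj hcj.1)))
  -- tail
  have claimT : (if grid β s m (n-1) ≤ ξ then (ξ - grid β s m (n-1)) ^ p else 0) ≤ b := by
    split_ifs with h
    · have e : grid β s m (n-1) = gfun β s m m := by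
        rw [grid_hi hs hm (by omega), min_eq_right (by omega : m ≤ n - 1 - 3*m)]
      rw [e] at h ⊢
      have hξ : ξ = |ξ| := (abs_of_pos (lt_of_lt_of_le (gfun_pos hs le_rfl) h)).symm
      have := tail_term' hp hη hs hm h
      rw [hξ] at this ⊢
      exact le_trans this hcmp1
    · exact hb0
  -- head
  have claimH : (if ξ < grid β s m 0 then (grid β s m 0 - ξ) ^ p else 0) ≤ b := by
    split_ifs with h
    · have e : grid β s m 0 = -(gfun β s m m) := by
        rw [grid_lo (Nat.zero_le m), Nat.sub_zero]
      rw [e] at h ⊢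
      have hg0 : 0 < gfun β s m m := gfun_pos hs le_rfl
      have hξ : -ξ = |ξ| := (abs_of_neg (by linarith)).symm
      have ht : gfun β s m m ≤ -ξ := by linarith
      have := tail_term' hp hη hs hm ht
      have hrw : -(gfun β s m m) - ξ = -ξ - gfun β s m m := by ring
      rw [hrw, hξ] at *
      exact le_trans (by rw [← hξ] at this ⊢; exact this) hcmp1
    · exact hb0
  have : Apow p n (grid β s m) ξ ≤ b + b + b := by
    unfold Apow
    exact add_le_add (add_le_add claimS claimT) claimH
  calc Apow p n (grid β s m) ξ ≤ b + b + b := this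
    _ = 3 * b := by ring

end PierceAux

open PierceAux in
/-- extended Pierce lemma, dimension one: there are a universal
constant `C_{p,η} > 0` and a rank `n_{p,η} ≥ 1` such that for every real random
variable `X ∈ L^{p+η}` and every `n ≥ n_{p,η}`,
`inf over ordered n-tuples x of (E[A_{p,n}(x,X)^p])^{1/p} ≤ C_{p,η} ‖X‖_{p+η} n⁻¹`. -/
theorem extended_pierce_dim_one (p η : ℝ) (hp : 0 < p) (hη : 0 < η) :
    ∃ (C : ℝ) (_ : 0 < C) (N : ℕ) (_ : 1 ≤ N),
      ∀ (Ω : Type) (_ : MeasurableSpace Ω) (μ : Measure Ω)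
        (_ : IsProbabilityMeasure μ) (X : Ω → ℝ) (_ : Measurable X)
        (_ : MemLp X (ENNReal.ofReal (p + η)) μ) (n : ℕ), N ≤ n →
        (⨅ (x : ℕ → ℝ) (_ : MonotoneOn x (Set.Iio n)),
            (∫⁻ ω, ENNReal.ofReal (Apow p n x (X ω)) ∂μ) ^ (1 / p))
          ≤ ENNReal.ofReal C * eLpNorm X (ENNReal.ofReal (p + η)) μ / n := by
  have hβ : 0 < p / η := by positivity
  set β : ℝ := p / η with hβdef
  set D : ℝ := max 1 (β * 2 ^ (β + 1)) with hDdef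
  have hD1 : (1:ℝ) ≤ D := le_max_left _ _
  have hD0 : (0:ℝ) < D := lt_of_lt_of_le one_pos hD1
  have h6 : (0:ℝ) < 6 ^ (1/p) := Real.rpow_pos_of_pos (by norm_num) _
  refine ⟨16 * (6 ^ (1/p) * D), by positivity, 16, by norm_num, ?_⟩
  intro Ω mΩ μ hprob X hX hmem n hn
  have hq0 : (ENNReal.ofReal (p + η)) ≠ 0 := (ENNReal.ofReal_pos.mpr (by positivity)).ne'
  have hqt : (ENNReal.ofReal (p + η)) ≠ ⊤ := ENNReal.ofReal_ne_top
  set s : ℝ := (eLpNorm X (ENNReal.ofReal (p + η)) μ).toReal with hsdef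
  have hfin : eLpNorm X (ENNReal.ofReal (p + η)) μ ≠ ⊤ := hmem.eLpNorm_ne_top
  have hLP : ENNReal.ofReal s = eLpNorm X (ENNReal.ofReal (p + η)) μ :=
    ENNReal.ofReal_toReal hfin
  have hs0 : 0 ≤ s := ENNReal.toReal_nonneg
  rcases hs0.eq_or_lt with hzero | hs
  · -- degenerate case : `X = 0` a.e.
    have hX0 : X =ᵐ[μ] 0 := by
      have h0 : eLpNorm X (ENNReal.ofReal (p + η)) μ = 0 := by
        rw [← hLP, ← hzero]; simp
      exact (eLpNorm_eq_zero_iff hX.aestronglyMeasurable hq0).mp h0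
    refine le_trans (iInf₂_le (fun _ : ℕ => (0:ℝ))
      (monotoneOn_const : MonotoneOn (fun _ : ℕ => (0:ℝ)) (Set.Iio n))) ?_
    have hzero' : ∫⁻ ω, ENNReal.ofReal (Apow p n (fun _ => (0:ℝ)) (X ω)) ∂μ = 0 := by
      have hae : (fun ω => ENNReal.ofReal (Apow p n (fun _ => (0:ℝ)) (X ω)))
          =ᵐ[μ] (fun _ => 0) := by
        filter_upwards [hX0] with ω hω
        have hω' : X ω = 0 := hω
        simp [Apow, hω', Real.zero_rpow hp.ne']
      rw [lintegral_congr_ae hae, lintegral_zero]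
    rw [hzero', ENNReal.zero_rpow_of_pos (by positivity)]
    exact zero_le
  · -- main case
    set m : ℕ := n / 8 with hmdef
    have hm1 : 1 ≤ m := by omega
    have h4m : 4 * m < n := by omega
    have hm0 : (0:ℝ) < m := by exact_mod_cast hm1
    have hn0 : (0:ℝ) < n := by positivity
    have hn16 : (n:ℝ) ≤ 16 * m := by exact_mod_cast (by omega : n ≤ 16 * m)
    refine le_trans (iInf₂_le (grid β s m) ((grid_mono hβ hs hm1).monotoneOn _)) ?_
    set c₁ : ℝ := 3 * ((D / m) ^ p * s ^ p) with hc₁def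
    set c₂ : ℝ := 3 * ((D / m) ^ p * s ^ (-η)) with hc₂def
    have hc₁0 : 0 ≤ c₁ := by positivity
    have hc₂0 : 0 ≤ c₂ := by positivity
    -- step 1 : bound the integral using the pointwise estimate
    have step1 : ∫⁻ ω, ENNReal.ofReal (Apow p n (grid β s m) (X ω)) ∂μ ≤
        ∫⁻ ω, (ENNReal.ofReal c₁ + ENNReal.ofReal c₂ * ((‖X ω‖₊ : ℝ≥0∞)) ^ (p+η)) ∂μ := by
      apply lintegral_mono
      intro ω
      dsimp only
      have hpt := apow_pointwise hp hη hs hm1 h4m (X ω)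
      have heq : ENNReal.ofReal (c₁ + c₂ * |X ω| ^ (p+η)) =
          ENNReal.ofReal c₁ + ENNReal.ofReal c₂ * ((‖X ω‖₊ : ℝ≥0∞)) ^ (p+η) := by
        rw [ENNReal.ofReal_add hc₁0 (by positivity), ENNReal.ofReal_mul hc₂0,
          ← ENNReal.ofReal_rpow_of_nonneg (abs_nonneg _) (by positivity),
          ← Real.norm_eq_abs, ofReal_norm, enorm_eq_nnnorm]
      rw [← heq]
      apply ENNReal.ofReal_le_ofReal
      calc Apow p n (grid β s m) (X ω) ≤
          3 * ((D / m) ^ p * s ^ p + (D / m) ^ p * (s ^ (-η) * |X ω| ^ (p+η))) := hpt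
        _ = c₁ + c₂ * |X ω| ^ (p+η) := by rw [hc₁def, hc₂def]; ring
    -- step 2 : compute the dominating integral
    have hI : ∫⁻ ω, ((‖X ω‖₊ : ℝ≥0∞)) ^ (p+η) ∂μ = (ENNReal.ofReal s) ^ (p+η) := by
      have hsn := eLpNorm_eq_lintegral_rpow_enorm_toReal (f := X) (μ := μ) hq0 hqt
      simp only [enorm_eq_nnnorm] at hsn
      rw [ENNReal.toReal_ofReal (by positivity : (0:ℝ) ≤ p + η)] at hsn
      rw [hLP, hsn, ← ENNReal.rpow_mul, one_div,
        inv_mul_cancel₀ (by positivity : p + η ≠ 0), ENNReal.rpow_one]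
    have step2 : ∫⁻ ω, (ENNReal.ofReal c₁ + ENNReal.ofReal c₂ * ((‖X ω‖₊ : ℝ≥0∞)) ^ (p+η)) ∂μ
        = ENNReal.ofReal c₁ + ENNReal.ofReal c₂ * (ENNReal.ofReal s) ^ (p+η) := by
      rw [lintegral_add_left measurable_const,
        lintegral_const_mul' _ _ ENNReal.ofReal_ne_top, lintegral_const,
        measure_univ, mul_one, hI]
    -- step 3 : simplify
    have hc₂s : c₂ * s ^ (p+η) = c₁ := by
      rw [hc₁def, hc₂def, mul_assoc, mul_assoc, ← Real.rpow_add hs,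
        show -η + (p + η) = p by ring]
    have step3 : ENNReal.ofReal c₁ + ENNReal.ofReal c₂ * (ENNReal.ofReal s) ^ (p+η)
        = ENNReal.ofReal (6 * ((D / m) ^ p * s ^ p)) := by
      rw [ENNReal.ofReal_rpow_of_nonneg hs0 (by positivity),
        ← ENNReal.ofReal_mul hc₂0, hc₂s, ← ENNReal.ofReal_add hc₁0 hc₁0]
      congr 1
      rw [hc₁def]; ring
    -- step 4 : take p-th roots
    have hu : (6 * ((D / m) ^ p * s ^ p)) ^ (1/p) = 6 ^ (1/p) * (D / m * s) := by
      rw [← Real.mul_rpow (by positivity) hs0,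
        Real.mul_rpow (by norm_num : (0:ℝ) ≤ 6) (by positivity),
        ← Real.rpow_mul (by positivity : (0:ℝ) ≤ D / m * s),
        mul_one_div_cancel hp.ne', Real.rpow_one]
    have step4 : (∫⁻ ω, ENNReal.ofReal (Apow p n (grid β s m) (X ω)) ∂μ) ^ (1/p) ≤
        ENNReal.ofReal (6 ^ (1/p) * (D / m * s)) := by
      rw [← hu, ← ENNReal.ofReal_rpow_of_nonneg (by positivity) (by positivity)]
      exact ENNReal.rpow_le_rpow (le_trans step1 (le_of_eq (step2.trans step3)))
        (by positivity)
    refine le_trans step4 ?_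
    -- step 5 : final comparison
    rw [← hLP, ← ENNReal.ofReal_mul (by positivity), ← ENNReal.ofReal_natCast n,
      ← ENNReal.ofReal_div_of_pos hn0]
    apply ENNReal.ofReal_le_ofReal
    rw [show (6:ℝ) ^ (1/p) * (D / m * s) = 6 ^ (1/p) * D * s / m by ring,
      div_le_div_iff₀ hm0 hn0]
    nlinarith [mul_pos h6 (mul_pos hD0 hs)]

end
end

section
/- Let ξ = Σ_{i∈I} λᵢ xᵢ with λᵢ ≥ 0, Σ λᵢ = 1, xᵢ ∈ ℝ^d, and let i₀ ∈ I with λ_{i₀} > 0. For θ ∈ (0,1) set x̃_{i₀} = ξ + θ(x_{i₀} − ξ), λ̃_{i₀} = λ_{i₀}/(θ + λ_{i₀}(1−θ)) and λ̃ᵢ = λᵢ θ/(θ + λ_{i₀}(1−θ)) for i ≠ i₀. Then λ̃ᵢ ≥ 0, Σᵢ λ̃ᵢ = 1, λ̃_{i₀} x̃_{i₀} + Σ_{i≠i₀} λ̃ᵢ xᵢ = ξ, and for p ≥ 1, λ̃_{i₀}‖ξ − x̃_{i₀}‖^p + Σ_{i≠i₀} λ̃ᵢ‖ξ − xᵢ‖^p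 ≤ Σ_{i∈I} λᵢ‖ξ − xᵢ‖^p. -/
open Finset

/-- one-step point contraction of the firewall lemma:
if `ξ = Σᵢ λᵢ xᵢ` is a convex combination, `λ_{i₀} > 0`, `θ ∈ (0,1)`, and one
replaces `x_{i₀}` by `x̃_{i₀} = ξ + θ(x_{i₀} - ξ)` with the new weights
`λ̃_{i₀} = λ_{i₀}/(θ + λ_{i₀}(1-θ))`, `λ̃ᵢ = λᵢθ/(θ + λ_{i₀}(1-θ))` (`i ≠ i₀`),
then the new weights are nonnegative, sum to `1`, reproduce `ξ`, and the
barycentric `p`-th power error does not increase. -/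
theorem firewall_point_contraction
    {E : Type*} [NormedAddCommGroup E] [NormedSpace ℝ E]
    {ι : Type*} [Fintype ι] [DecidableEq ι]
    (p : ℝ) (hp : 1 ≤ p) (lam : ι → ℝ) (x : ι → E) (ξ : E)
    (hlam : ∀ i, 0 ≤ lam i) (hsum : ∑ i, lam i = 1)
    (hbar : ∑ i, lam i • x i = ξ)
    (i₀ : ι) (hi₀ : 0 < lam i₀) (θ : ℝ) (hθ₀ : 0 < θ) (hθ₁ : θ < 1) :
    (∀ i, 0 ≤ (fun i => if i = i₀ then lam i₀ / (θ + lam i₀ * (1 - θ))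
        else lam i * θ / (θ + lam i₀ * (1 - θ))) i) ∧
    (∑ i, (fun i => if i = i₀ then lam i₀ / (θ + lam i₀ * (1 - θ))
        else lam i * θ / (θ + lam i₀ * (1 - θ))) i) = 1 ∧
    (∑ i, (fun i => if i = i₀ then lam i₀ / (θ + lam i₀ * (1 - θ))
        else lam i * θ / (θ + lam i₀ * (1 - θ))) i •
          (fun i => if i = i₀ then ξ + θ • (x i₀ - ξ) else x i) i) = ξ ∧
    (∑ i, (fun i => if i = i₀ then lam i₀ / (θ + lam i₀ * (1 - θ))
        else lam i * θ / (θ + lam i₀ * (1 - θ))) i *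
          ‖ξ - (fun i => if i = i₀ then ξ + θ • (x i₀ - ξ) else x i) i‖ ^ p)
      ≤ ∑ i, lam i * ‖ξ - x i‖ ^ p := by
  have h1θ : 0 ≤ 1 - θ := by linarith
  have hD : 0 < θ + lam i₀ * (1 - θ) := by
    have : 0 ≤ lam i₀ * (1 - θ) := mul_nonneg hi₀.le h1θ
    linarith
  have hθD : θ ≤ θ + lam i₀ * (1 - θ) := by
    have : 0 ≤ lam i₀ * (1 - θ) := mul_nonneg hi₀.le h1θ
    linarith
  have hrest : ∑ i ∈ univ.erase i₀, lam i = 1 - lam i₀ := by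
    have := Finset.add_sum_erase univ lam (Finset.mem_univ i₀)
    linarith [hsum ▸ this]
  have hrestx : ∑ i ∈ univ.erase i₀, lam i • x i = ξ - lam i₀ • x i₀ := by
    have h := Finset.add_sum_erase univ (fun i => lam i • x i) (Finset.mem_univ i₀)
    rw [hbar] at h
    rw [← h]; abel
  refine ⟨?_, ?_, ?_, ?_⟩
  · intro i
    by_cases h : i = i₀
    · simp only [h, if_true]
      exact div_nonneg hi₀.le hD.le
    · simp only [if_neg h]
      exact div_nonneg (mul_nonneg (hlam i) hθ₀.le) hD.le
  · rw [← Finset.add_sum_erase univ _ (Finset.mem_univ i₀)]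
    simp only [if_true]
    rw [Finset.sum_congr rfl (fun i hi => if_neg (Finset.ne_of_mem_erase hi))]
    have : ∑ i ∈ univ.erase i₀, lam i * θ / (θ + lam i₀ * (1 - θ))
        = (1 - lam i₀) * θ / (θ + lam i₀ * (1 - θ)) := by
      rw [← Finset.sum_div, ← Finset.sum_mul, hrest]
    rw [this]
    field_simp
    ring
  · rw [← Finset.add_sum_erase univ _ (Finset.mem_univ i₀)]
    simp only [if_true]
    rw [Finset.sum_congr rfl (fun i hi => by
      rw [if_neg (Finset.ne_of_mem_erase hi), if_neg (Finset.ne_of_mem_erase hi)])]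
    have : ∑ i ∈ univ.erase i₀, (lam i * θ / (θ + lam i₀ * (1 - θ))) • x i
        = (θ / (θ + lam i₀ * (1 - θ))) • (ξ - lam i₀ • x i₀) := by
      rw [← hrestx, Finset.smul_sum]
      refine Finset.sum_congr rfl fun i _ => ?_
      rw [smul_smul]
      congr 1
      field_simp
    rw [this]
    match_scalars <;> (field_simp; ring)
  · apply Finset.sum_le_sum
    intro i _
    by_cases h : i = i₀
    · subst h
      simp only [if_true]
      have hnorm : ‖ξ - (ξ + θ • (x i - ξ))‖ = θ * ‖ξ - x i‖ := by
        have : ξ - (ξ + θ • (x i - ξ)) = θ • (ξ - x i) := by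
          rw [smul_sub, smul_sub]; abel
        rw [this, norm_smul, Real.norm_of_nonneg hθ₀.le]
      rw [hnorm, Real.mul_rpow hθ₀.le (norm_nonneg _), ← mul_assoc]
      have hθp : θ ^ p ≤ θ := by
        calc θ ^ p ≤ θ ^ (1 : ℝ) :=
          Real.rpow_le_rpow_of_exponent_ge hθ₀ hθ₁.le hp
        _ = θ := Real.rpow_one θ
      have hc : lam i / (θ + lam i * (1 - θ)) * θ ^ p ≤ lam i := by
        rw [div_mul_eq_mul_div, div_le_iff₀ hD]
        calc lam i * θ ^ p ≤ lam i * θ := by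
              exact mul_le_mul_of_nonneg_left hθp hi₀.le
          _ ≤ lam i * (θ + lam i * (1 - θ)) :=
              mul_le_mul_of_nonneg_left hθD hi₀.le
      exact mul_le_mul_of_nonneg_right hc (Real.rpow_nonneg (norm_nonneg _) p)
    · simp only [if_neg h]
      have hc : lam i * θ / (θ + lam i₀ * (1 - θ)) ≤ lam i := by
        rw [div_le_iff₀ hD]
        exact mul_le_mul_of_nonneg_left hθD (hlam i)
      exact mul_le_mul_of_nonneg_right hc (Real.rpow_nonneg (norm_nonneg _) p)
end

section
/- Let P be a probability measure on ℝ^d singular with respect to Lebesgue measure and with compact support. Then for every p ≥ 1, lim_{n→∞} n^{p/d} · d_{n,p}(P)^p = 0, i.e. the dual quantization error of a compactly supported singular measure decays faster than n^{−1/d}. -/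
open MeasureTheory ENNReal Filter

noncomputable section

namespace DnpAux

variable {d : ℕ}

/-- corner of cube `[a, a+h]^d` indexed by `s`. -/
def corner (a : Fin d → ℝ) (h : ℝ) (s : Fin d → Bool) : Fin d → ℝ :=
  fun i => a i + if s i then h else 0

lemma corner_injective (a : Fin d → ℝ) {h : ℝ} (hh : h ≠ 0) :
    Function.Injective (corner a h) := by
  intro s s' he
  funext i
  have := congrFun he i
  simp only [corner] at this
  by_cases hs : s i <;> by_cases hs' : s' i <;> simp [hs, hs'] at this ⊢ <;> tauto

lemma Fppow_le_cube (p : ℝ) (hp : 1 ≤ p) (a : Fin d → ℝ) {h : ℝ} (hh : 0 < h)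
    (ξ : Fin d → ℝ) (hξ : ∀ i, a i ≤ ξ i ∧ ξ i ≤ a i + h)
    (Γ : Finset (Fin d → ℝ)) (hΓ : ∀ s : Fin d → Bool, corner a h s ∈ Γ) :
    Fppow p Γ ξ ≤ ENNReal.ofReal (h ^ p) := by
  classical
  set t : Fin d → ℝ := fun i => (ξ i - a i) / h with ht
  have ht0 : ∀ i, 0 ≤ t i := fun i => div_nonneg (by linarith [(hξ i).1]) hh.le
  have ht1 : ∀ i, t i ≤ 1 := by
    intro i
    rw [div_le_one hh]
    linarith [(hξ i).2]
  -- coordinate weight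
  set wc : Fin d → ℝ → ℝ := fun i y =>
    if y = a i + h then t i else if y = a i then 1 - t i else 0 with hwc
  set w : (Fin d → ℝ) → ℝ := fun x => ∏ i, wc i (x i) with hw
  have hwc01 : ∀ i y, 0 ≤ wc i y ∧ wc i y ≤ 1 := by
    intro i y
    simp only [hwc]
    split_ifs <;> constructor <;> linarith [ht0 i, ht1 i]
  have hw0 : ∀ x, 0 ≤ w x := fun x => Finset.prod_nonneg fun i _ => (hwc01 i (x i)).1
  have hw1 : ∀ x, w x ≤ 1 := fun x =>
    Finset.prod_le_one (fun i _ => (hwc01 i (x i)).1) (fun i _ => (hwc01 i (x i)).2)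
  -- f i b = weight factor of corner coordinate
  set f : Fin d → Bool → ℝ := fun i b => if b then t i else 1 - t i with hf
  have hwcorner : ∀ s, w (corner a h s) = ∏ i, f i (s i) := by
    intro s
    refine Finset.prod_congr rfl fun i _ => ?_
    simp only [hwc, hf, corner]
    by_cases hs : s i
    · simp [hs]
    · simp [hs, hh.ne']
  -- any x with nonzero weight is a corner
  have hx_corner : ∀ x, w x ≠ 0 → x ∈ Finset.image (corner a h) Finset.univ := by
    intro x hx
    have hcoord : ∀ i, wc i (x i) ≠ 0 := by
      intro i hi
      exact hx (Finset.prod_eq_zero (Finset.mem_univ i) hi)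
    refine Finset.mem_image.2 ⟨fun i => decide (x i = a i + h), Finset.mem_univ _, ?_⟩
    funext i
    have := hcoord i
    simp only [hwc] at this
    by_cases h1 : x i = a i + h
    · simp [corner, h1]
    · by_cases h2 : x i = a i
      · simp [corner, h1, h2]
      · simp [h1, h2] at this
  -- reduce sums over Γ to sums over corners
  have himg : Finset.image (corner a h) Finset.univ ⊆ Γ := by
    intro x hx
    obtain ⟨s, _, rfl⟩ := Finset.mem_image.1 hx
    exact hΓ s
  have hsum_eq : ∀ {M : Type} [AddCommMonoid M] (g : (Fin d → ℝ) → ℝ → M),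
      (∀ x, g x 0 = 0) → ∑ x ∈ Γ, g x (w x) = ∑ s : Fin d → Bool, g (corner a h s) (w (corner a h s)) := by
    intro M _ g hg0
    have h1 : ∑ x ∈ Finset.image (corner a h) Finset.univ, g x (w x) = ∑ x ∈ Γ, g x (w x) := by
      refine Finset.sum_subset himg fun x _ hx => ?_
      have hw0x : w x = 0 := by
        by_contra hc
        exact hx (hx_corner x hc)
      rw [hw0x, hg0]
    rw [← h1, Finset.sum_image (fun s _ s' _ he => corner_injective a hh.ne' he)]
  -- sum of weights is 1
  have hfsum : ∀ i, f i true + f i false = 1 := by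
    intro i; simp [hf]
  have hsumw : (∑ x ∈ Γ, w x) = 1 := by
    have h2 := hsum_eq (M := ℝ) (fun _ c => c) (fun _ => rfl)
    rw [h2]
    have : ∑ s : Fin d → Bool, w (corner a h s) = ∑ s : Fin d → Bool, ∏ i, f i (s i) :=
      Finset.sum_congr rfl fun s _ => hwcorner s
    rw [this]
    have := Finset.prod_univ_sum (fun _ : Fin d => (Finset.univ : Finset Bool)) f
    rw [Fintype.piFinset_univ] at this
    rw [← this]
    calc ∏ i : Fin d, ∑ b : Bool, f i b = ∏ i : Fin d, (1:ℝ) := by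
          refine Finset.prod_congr rfl fun i _ => ?_
          rw [Fintype.sum_bool, hfsum]
      _ = 1 := Finset.prod_const_one
  -- barycenter identity
  have hbary : (∑ x ∈ Γ, w x • x) = ξ := by
    have h2 := hsum_eq (M := Fin d → ℝ) (fun x c => c • x) (fun x => zero_smul ℝ x)
    rw [h2]
    funext j
    rw [Finset.sum_apply]
    set cj : Bool → ℝ := fun b => a j + if b then h else 0 with hcj
    set g : Fin d → Bool → ℝ := fun i b => if i = j then f i b * cj b else f i b with hg
    have hterm : ∀ s : Fin d → Bool,
        (w (corner a h s) • corner a h s) j = ∏ i, g i (s i) := by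
      intro s
      simp only [Pi.smul_apply, smul_eq_mul, hwcorner]
      have hcs : corner a h s j = cj (s j) := rfl
      have he : ∀ i : Fin d, g i (s i)
          = f i (s i) * (if i = j then cj (s j) else 1) := by
        intro i
        simp only [hg]
        split_ifs with hij
        · subst hij; ring
        · ring
      calc (∏ i, f i (s i)) * corner a h s j
          = (∏ i, f i (s i)) * ∏ i : Fin d, (if i = j then cj (s j) else 1) := by
            rw [Finset.prod_ite_eq' Finset.univ j (fun _ => cj (s j)),
              if_pos (Finset.mem_univ j), hcs]
        _ = ∏ i, (f i (s i) * if i = j then cj (s j) else 1) := Finset.prod_mul_distrib.symm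
        _ = _ := Finset.prod_congr rfl fun i _ => (he i).symm
    rw [Finset.sum_congr rfl fun s _ => hterm s]
    have hprod := Finset.prod_univ_sum (fun _ : Fin d => (Finset.univ : Finset Bool)) g
    rw [Fintype.piFinset_univ] at hprod
    rw [← hprod]
    have hfac : ∀ i : Fin d, (∑ b : Bool, g i b) = if i = j then ξ j else 1 := by
      intro i
      rw [Fintype.sum_bool]
      simp only [hg]
      split_ifs with hij
      · subst hij
        simp only [hcj, hf, if_pos, if_neg]
        have : t i * h = ξ i - a i := by
          simp only [ht]
          exact div_mul_cancel₀ _ hh.ne'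
        simp only [if_true, Bool.false_eq_true, if_false]
        nlinarith [this]
      · exact hfsum i
    rw [Finset.prod_congr rfl fun i _ => hfac i,
      Finset.prod_ite_eq' Finset.univ j (fun _ => ξ j), if_pos (Finset.mem_univ j)]
  -- cost bound
  have hnorm : ∀ s : Fin d → Bool, ‖ξ - corner a h s‖ ≤ h := by
    intro s
    rw [pi_norm_le_iff_of_nonneg hh.le]
    intro i
    have h1 := (hξ i).1
    have h2 := (hξ i).2
    simp only [Pi.sub_apply, corner, Real.norm_eq_abs]
    by_cases hs : s i <;> simp [hs, abs_le] <;> constructor <;> linarith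
  have hcost : (∑ x ∈ Γ, w x * ‖ξ - x‖ ^ p) ≤ h ^ p := by
    have h2 := hsum_eq (M := ℝ) (fun x c => c * ‖ξ - x‖ ^ p) (fun x => zero_mul _)
    rw [h2]
    calc ∑ s : Fin d → Bool, w (corner a h s) * ‖ξ - corner a h s‖ ^ p
        ≤ ∑ s : Fin d → Bool, w (corner a h s) * h ^ p := by
          refine Finset.sum_le_sum fun s _ => ?_
          exact mul_le_mul_of_nonneg_left
            (Real.rpow_le_rpow (norm_nonneg _) (hnorm s) (by linarith)) (hw0 _)
      _ = (∑ s : Fin d → Bool, w (corner a h s)) * h ^ p := (Finset.sum_mul _ _ _).symm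
      _ = 1 * h ^ p := by
          have h3 := hsum_eq (M := ℝ) (fun _ c => c) (fun _ => rfl)
          rw [← h3, hsumw]
      _ = h ^ p := one_mul _
  have hmem : ENNReal.ofReal (∑ x ∈ Γ, w x * ‖ξ - x‖ ^ p) ∈
      { c | ∃ w : (Fin d → ℝ) → ℝ, (∀ x ∈ Γ, 0 ≤ w x) ∧ (∀ x ∈ Γ, w x ≤ 1) ∧
        (∑ x ∈ Γ, w x) = 1 ∧ (∑ x ∈ Γ, w x • x) = ξ ∧
        c = ENNReal.ofReal (∑ x ∈ Γ, w x * ‖ξ - x‖ ^ p) } :=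
    ⟨w, fun x _ => hw0 x, fun x _ => hw1 x, hsumw, hbary, rfl⟩
  exact le_trans (sInf_le hmem) (ENNReal.ofReal_le_ofReal hcost)


def icube (h : ℝ) (k : Fin d → ℤ) : Set (Fin d → ℝ) :=
  Set.pi Set.univ fun i => Set.Ico (h * k i) (h * k i + h)

lemma measurableSet_icube (h : ℝ) (k : Fin d → ℤ) : MeasurableSet (icube h k) :=
  MeasurableSet.univ_pi fun i => measurableSet_Ico

lemma volume_icube {h : ℝ} (hh : 0 < h) (k : Fin d → ℤ) :
    volume (icube h k) = ENNReal.ofReal h ^ d := by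
  rw [icube, volume_pi_pi]
  simp [Real.volume_Ico]

def fidx (h : ℝ) (ξ : Fin d → ℝ) : Fin d → ℤ := fun i => ⌊ξ i / h⌋

lemma mem_icube_fidx {h : ℝ} (hh : 0 < h) (ξ : Fin d → ℝ) : ξ ∈ icube h (fidx h ξ) := by
  intro i _
  constructor
  · rw [mul_comm, ← le_div_iff₀ hh]
    exact Int.floor_le _
  · have := Int.lt_floor_add_one (ξ i / h)
    rw [div_lt_iff₀ hh] at this
    calc ξ i < (↑⌊ξ i / h⌋ + 1) * h := this
      _ = h * ↑(fidx h ξ i) + h := by rw [fidx]; ring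

lemma icube_disjoint {h : ℝ} (hh : 0 < h) {k k' : Fin d → ℤ} (hkk : k ≠ k') :
    Disjoint (icube h k) (icube h k') := by
  rw [Set.disjoint_left]
  intro x hx hx'
  apply hkk
  funext i
  have h1 := hx i (Set.mem_univ i)
  have h2 := hx' i (Set.mem_univ i)
  simp only [Set.mem_Ico] at h1 h2
  have hlt1 : (k i : ℝ) < k' i + 1 := by
    rw [← mul_lt_mul_iff_right₀ hh]
    calc h * (k i : ℝ) ≤ x i := h1.1
      _ < h * k' i + h := h2.2
      _ = h * ((k' i : ℝ) + 1) := by ring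
  have hlt2 : (k' i : ℝ) < k i + 1 := by
    rw [← mul_lt_mul_iff_right₀ hh]
    calc h * (k' i : ℝ) ≤ x i := h2.1
      _ < h * k i + h := h1.2
      _ = h * ((k i : ℝ) + 1) := by ring
  have e1 : k i < k' i + 1 := by exact_mod_cast hlt1
  have e2 : k' i < k i + 1 := by exact_mod_cast hlt2
  omega

def box (h R : ℝ) : Finset (Fin d → ℤ) :=
  Fintype.piFinset fun _ => Finset.Icc (-⌈R/h⌉) ⌈R/h⌉

lemma fidx_mem_box {h R : ℝ} (hh : 0 < h) {ξ : Fin d → ℝ} (hξ : ‖ξ‖ ≤ R) :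
    fidx h ξ ∈ (box h R : Finset (Fin d → ℤ)) := by
  rw [box, Fintype.mem_piFinset]
  intro i
  have hi : |ξ i| ≤ R := by
    calc |ξ i| = ‖ξ i‖ := (Real.norm_eq_abs _).symm
      _ ≤ ‖ξ‖ := norm_le_pi_norm ξ i
      _ ≤ R := hξ
  rw [abs_le] at hi
  rw [Finset.mem_Icc]
  have hub : ξ i / h ≤ R / h := by gcongr; exact hi.2
  have hlb : -R / h ≤ ξ i / h := by gcongr; exact hi.1
  constructor
  · calc -⌈R/h⌉ = ⌊-(R/h)⌋ := (Int.floor_neg).symm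
      _ = ⌊-R/h⌋ := by rw [neg_div]
      _ ≤ ⌊ξ i / h⌋ := Int.floor_le_floor hlb
  · calc (⌊ξ i / h⌋ : ℤ) ≤ ⌈ξ i / h⌉ := Int.floor_le_ceil _
      _ ≤ ⌈R/h⌉ := Int.ceil_le_ceil hub


def cornersOf (h : ℝ) (k : Fin d → ℤ) : Finset (Fin d → ℝ) :=
  Finset.image (corner (fun i => h * k i) h) Finset.univ

lemma card_cornersOf_le (h : ℝ) (k : Fin d → ℤ) :
    (cornersOf h k : Finset (Fin d → ℝ)).card ≤ 2 ^ d := by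
  refine Finset.card_image_le.trans ?_
  simp [Finset.card_univ]

lemma card_biUnion_cornersOf_le (h : ℝ) (S : Finset (Fin d → ℤ)) :
    (S.biUnion (cornersOf h)).card ≤ S.card * 2 ^ d := by
  refine (Finset.card_biUnion_le).trans ?_
  calc ∑ k ∈ S, (cornersOf h k).card ≤ ∑ _k ∈ S, 2 ^ d :=
        Finset.sum_le_sum fun k _ => card_cornersOf_le h k
    _ = S.card * 2 ^ d := by rw [Finset.sum_const, smul_eq_mul]

lemma Fppow_le_of_fidx_mem (p : ℝ) (hp : 1 ≤ p) {h : ℝ} (hh : 0 < h)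
    (S : Finset (Fin d → ℤ)) (ξ : Fin d → ℝ) (hmem : fidx h ξ ∈ S)
    (Γ : Finset (Fin d → ℝ)) (hΓ : S.biUnion (cornersOf h) ⊆ Γ) :
    Fppow p Γ ξ ≤ ENNReal.ofReal (h ^ p) := by
  apply Fppow_le_cube p hp (fun i => h * fidx h ξ i) hh ξ
  · intro i
    have := mem_icube_fidx hh ξ i (Set.mem_univ i)
    simp only [Set.mem_Ico] at this
    exact ⟨this.1, this.2.le⟩
  · intro s
    apply hΓ
    exact Finset.mem_biUnion.2 ⟨fidx h ξ, hmem, Finset.mem_image_of_mem _ (Finset.mem_univ s)⟩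

lemma card_mul_le_vol {h : ℝ} (hh : 0 < h) (S : Finset (Fin d → ℤ)) (U : Set (Fin d → ℝ))
    (hsub : ∀ k ∈ S, icube h k ⊆ U) :
    (S.card : ℝ≥0∞) * ENNReal.ofReal h ^ d ≤ volume U := by
  have hdisj : (S : Set (Fin d → ℤ)).PairwiseDisjoint (icube h) :=
    fun k _ k' _ hkk => icube_disjoint hh hkk
  calc (S.card : ℝ≥0∞) * ENNReal.ofReal h ^ d = ∑ _k ∈ S, ENNReal.ofReal h ^ d := by
        rw [Finset.sum_const, nsmul_eq_mul]
    _ = ∑ k ∈ S, volume (icube h k) := Finset.sum_congr rfl fun k _ => (volume_icube hh k).symm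
    _ = volume (⋃ k ∈ S, icube h k) :=
        (measure_biUnion_finset hdisj fun k _ => measurableSet_icube h k).symm
    _ ≤ volume U := measure_mono (Set.iUnion₂_subset hsub)

lemma card_box_le {h R : ℝ} (hh : 0 < h) (hhR : h ≤ R) :
    (((box h R : Finset (Fin d → ℤ))).card : ℝ) ≤ (5 * R / h) ^ d := by
  rw [box, Fintype.card_piFinset]
  have hM1 : (1 : ℤ) ≤ ⌈R/h⌉ := by
    have : (1:ℝ) ≤ R / h := (one_le_div hh).2 hhR
    exact_mod_cast Int.one_le_ceil_iff.2 (by linarith)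
  have hcard : (Finset.Icc (-⌈R/h⌉) ⌈R/h⌉).card = (2 * ⌈R/h⌉ + 1).toNat := by
    rw [Int.card_Icc]
    congr 1
    ring
  have hMle : (⌈R/h⌉ : ℝ) ≤ R / h + 1 := (Int.ceil_lt_add_one _).le
  have hRh : (1:ℝ) ≤ R / h := (one_le_div hh).2 hhR
  have hcR : (((2 * ⌈R/h⌉ + 1).toNat : ℕ) : ℝ) ≤ 5 * R / h := by
    have hnn : (0:ℤ) ≤ 2 * ⌈R/h⌉ + 1 := by omega
    have : (((2 * ⌈R/h⌉ + 1).toNat : ℕ) : ℝ) = ((2 * ⌈R/h⌉ + 1 : ℤ) : ℝ) := by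
      exact_mod_cast congrArg (Int.cast : ℤ → ℝ) (Int.toNat_of_nonneg hnn)
    rw [this]
    push_cast
    rw [mul_div_assoc]
    nlinarith
  calc ((∏ _i : Fin d, (Finset.Icc (-⌈R/h⌉) ⌈R/h⌉).card : ℕ) : ℝ)
      = (((Finset.Icc (-⌈R/h⌉) ⌈R/h⌉).card : ℕ) : ℝ) ^ d := by
        rw [Finset.prod_const, Finset.card_univ, Fintype.card_fin]
        push_cast
        ring
    _ ≤ (5 * R / h) ^ d := by
        apply pow_le_pow_left₀ (by positivity)
        rw [hcard]
        exact hcR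

end DnpAux

open DnpAux in
set_option maxHeartbeats 1000000 in
/-- for a compactly supported probability measure `P` on `ℝ^d`
singular w.r.t. Lebesgue measure, `n^{p/d} d_{n,p}(P)^p → 0`. -/
theorem dnpPow_singular_compact (d : ℕ) (hd : 1 ≤ d) (p : ℝ) (hp : 1 ≤ p)
    (P : Measure (Fin d → ℝ)) [IsProbabilityMeasure P]
    (hsing : P ⟂ₘ (volume : Measure (Fin d → ℝ)))
    (hcomp : ∃ K : Set (Fin d → ℝ), IsCompact K ∧ P Kᶜ = 0) :
    Tendsto (fun n : ℕ => (n : ℝ≥0∞) ^ (p / d) * dnpPow n p P) atTop (nhds 0) := by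
  classical
  obtain ⟨K, hK, hPK⟩ := hcomp
  obtain ⟨s, hsm, hPs, hvs⟩ := hsing
  have hdR : (0:ℝ) < d := by exact_mod_cast hd
  have hp0 : (0:ℝ) < p := by linarith
  -- bounding radius
  obtain ⟨R₀, hR₀⟩ := hK.isBounded.subset_closedBall 0
  set R : ℝ := max R₀ 1 with hRdef
  have hR1 : (1:ℝ) ≤ R := le_max_right _ _
  have hR0 : (0:ℝ) < R := by linarith
  have hKR : K ⊆ Metric.closedBall 0 R :=
    hR₀.trans (Metric.closedBall_subset_closedBall (le_max_left _ _))
  have hKnorm : ∀ ξ ∈ K, ‖ξ‖ ≤ R := by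
    intro ξ hξ
    have := hKR hξ
    rwa [Metric.mem_closedBall, dist_zero_right] at this
  rw [ENNReal.tendsto_nhds_zero]
  intro ε hε
  -- reduce to a finite positive real target
  set e : ℝ≥0∞ := min ε 1 with hedef
  have he0 : 0 < e := lt_min hε zero_lt_one
  have heT : e ≠ ⊤ := by
    simp only [hedef]
    exact ne_top_of_le_ne_top one_ne_top (min_le_right _ _)
  set er : ℝ := e.toReal with herdef
  have her0 : 0 < er := ENNReal.toReal_pos he0.ne' heT
  -- choose δ and ε₂
  set ε₂ : ℝ := (er / 2) / (20 * R) ^ p with hε₂def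
  have hε₂0 : 0 < ε₂ := by positivity
  set δ : ℝ := (er / 2) ^ ((d:ℝ) / p) / 2 ^ (2 * d + 2) with hδdef
  have hδ0 : 0 < δ := by positivity
  set c : ℝ := 2 ^ (2 * d + 2) * δ with hcdef
  have hc0 : 0 < c := by positivity
  have hcval : c = (er / 2) ^ ((d:ℝ) / p) := by
    rw [hcdef, hδdef]
    field_simp
  -- the open set U'
  have hvolAK : volume (sᶜ ∩ K) < ENNReal.ofReal δ := by
    apply lt_of_le_of_lt (le_trans (measure_mono Set.inter_subset_left) hvs.le)
    exact ENNReal.ofReal_pos.2 hδ0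
  obtain ⟨U, hUsub, hUopen, hUvol⟩ := Set.exists_isOpen_lt_of_lt _ _ hvolAK
  set U' : Set (Fin d → ℝ) := U ∩ Metric.ball 0 (R + 1) with hU'def
  have hU'open : IsOpen U' := hUopen.inter Metric.isOpen_ball
  have hU'vol : volume U' < ENNReal.ofReal δ :=
    lt_of_le_of_lt (measure_mono Set.inter_subset_left) hUvol
  have hU'sub : sᶜ ∩ K ⊆ U' := by
    intro x hx
    refine ⟨hUsub hx, ?_⟩
    have := hKnorm x hx.2
    rw [Metric.mem_ball, dist_zero_right]
    linarith
  have hU'ne : U'ᶜ.Nonempty := by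
    refine ⟨fun _ => R + 2, ?_⟩
    intro hmem
    have := hmem.2
    rw [Metric.mem_ball, dist_zero_right] at this
    have hnorm : ‖(fun _ : Fin d => R + 2)‖ = R + 2 := by
      have : Nonempty (Fin d) := ⟨⟨0, hd⟩⟩
      rw [pi_norm_const, Real.norm_eq_abs, abs_of_pos (by linarith)]
    rw [hnorm] at this
    linarith
  -- bad sets and choice of h₀
  set B : ℕ → Set (Fin d → ℝ) := fun m =>
    sᶜ ∩ K ∩ {x | Metric.infDist x U'ᶜ ≤ 1 / (m + 1)} with hBdef
  have hBmeas : ∀ m, MeasurableSet (B m) := by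
    intro m
    refine ((hsm.compl.inter hK.isClosed.measurableSet).inter ?_)
    exact measurableSet_le (Metric.continuous_infDist_pt _).measurable measurable_const
  have hBanti : Antitone B := by
    intro m m' hmm
    refine Set.inter_subset_inter_right _ ?_
    intro x hx
    simp only [Set.mem_setOf_eq] at hx ⊢
    refine le_trans hx ?_
    apply one_div_le_one_div_of_le (by positivity)
    have : (m:ℝ) ≤ (m':ℝ) := by exact_mod_cast hmm
    linarith
  have hBempty : (⋂ m, B m) = ∅ := by
    ext x
    simp only [Set.mem_iInter, Set.mem_empty_iff_false, iff_false]
    intro hx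
    have hinU' : x ∈ U' := hU'sub (hx 0).1
    have hdist0 : Metric.infDist x U'ᶜ ≤ 0 := by
      by_contra hcon
      push_neg at hcon
      obtain ⟨m, hm⟩ := exists_nat_one_div_lt hcon
      exact absurd ((hx m).2) (by simp only [Set.mem_setOf_eq]; push_cast; linarith)
    have hdist : Metric.infDist x U'ᶜ = 0 :=
      le_antisymm hdist0 (Metric.infDist_nonneg)
    have hxcl : x ∈ closure U'ᶜ := (Metric.mem_closure_iff_infDist_zero hU'ne).2 hdist
    rw [hU'open.isClosed_compl.closure_eq] at hxcl
    exact hxcl hinU'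
  have htend : Tendsto (fun m => P (B m)) atTop (nhds 0) := by
    have := tendsto_measure_iInter_atTop (μ := P)
      (fun m => (hBmeas m).nullMeasurableSet) hBanti ⟨0, measure_ne_top _ _⟩
    rwa [hBempty, measure_empty] at this
  obtain ⟨m₀, hm₀⟩ := (htend.eventually_lt_const (show (0:ℝ≥0∞) < ENNReal.ofReal ε₂ from
    ENNReal.ofReal_pos.2 hε₂0)).exists
  set h₀ : ℝ := 1 / (m₀ + 1) with hh₀def
  have hh₀0 : 0 < h₀ := by positivity
  -- per-n construction
  have hd0 : (d:ℝ) ≠ 0 := hdR.ne'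
  filter_upwards [eventually_ge_atTop (max (20 ^ d) 1),
    eventually_ge_atTop (Nat.ceil (c / h₀ ^ d) + 1)] with n hn1 hn2
  have hn1' : 20 ^ d ≤ n := le_trans (le_max_left _ _) hn1
  have hnpos : 1 ≤ n := le_trans (le_max_right _ _) hn1
  have hnR0' : (0:ℝ) < (n:ℝ) := by exact_mod_cast hnpos
  have hn1R' : ((20:ℝ) ^ (d:ℕ)) ≤ (n:ℝ) := by exact_mod_cast hn1'
  have hceilR' : ((Nat.ceil (c / h₀ ^ (d:ℕ)) : ℕ) : ℝ) ≤ (n:ℝ) := by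
    exact_mod_cast le_trans (Nat.le_succ _) hn2
  set nR : ℝ := (n : ℝ) with hnRdef
  have hnR0 : (0:ℝ) < nR := hnR0'
  have hnrt0 : (0:ℝ) < nR ^ (1/(d:ℝ)) := Real.rpow_pos_of_pos hnR0 _
  set hc : ℝ := 20 * R / nR ^ (1/(d:ℝ)) with hhcdef
  set hf : ℝ := (c / nR) ^ (1/(d:ℝ)) with hhfdef
  have hhc0 : 0 < hc := by positivity
  have hhf0 : 0 < hf := Real.rpow_pos_of_pos (by positivity) _
  have hrootd : ∀ x : ℝ, 0 ≤ x → (x ^ (1/(d:ℝ))) ^ (d:ℕ) = x := by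
    intro x hx
    rw [← Real.rpow_natCast (x ^ (1/(d:ℝ))) d, ← Real.rpow_mul hx, one_div,
      inv_mul_cancel₀ hd0, Real.rpow_one]
  have hn20 : (20:ℝ) ≤ nR ^ (1/(d:ℝ)) := by
    have h1 : ((20:ℝ) ^ (d:ℕ)) ≤ nR := hn1R'
    have h2 := Real.rpow_le_rpow (by positivity) h1 (by positivity : (0:ℝ) ≤ 1/(d:ℝ))
    rwa [← Real.rpow_natCast (20:ℝ) d, ← Real.rpow_mul (by norm_num),
      mul_one_div, div_self hd0, Real.rpow_one] at h2
  have hhcR : hc ≤ R := by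
    rw [hhcdef, div_le_iff₀ hnrt0]
    nlinarith
  have hhfh₀ : hf ≤ h₀ := by
    have hceil : c / h₀ ^ (d:ℕ) ≤ nR := by
      calc c / h₀ ^ (d:ℕ) ≤ (Nat.ceil (c / h₀ ^ (d:ℕ)) : ℝ) := Nat.le_ceil _
        _ ≤ nR := hceilR'
    have hcn : c / nR ≤ h₀ ^ (d:ℕ) := by
      rw [div_le_iff₀ hnR0]
      calc c = (c / h₀ ^ (d:ℕ)) * h₀ ^ (d:ℕ) := by field_simp
        _ ≤ nR * h₀ ^ (d:ℕ) := by nlinarith [pow_pos hh₀0 d]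
        _ = h₀ ^ (d:ℕ) * nR := mul_comm _ _
    calc hf ≤ (h₀ ^ (d:ℕ)) ^ (1/(d:ℝ)) :=
          Real.rpow_le_rpow (by positivity) hcn (by positivity)
      _ = h₀ := by
          rw [← Real.rpow_natCast h₀ d, ← Real.rpow_mul hh₀0.le, mul_one_div,
            div_self hd0, Real.rpow_one]
  -- the grids
  set Sc : Finset (Fin d → ℤ) := box hc R with hScdef
  set Sf : Finset (Fin d → ℤ) := (box hf R).filter (fun k => icube hf k ⊆ U') with hSfdef
  set Γ : Finset (Fin d → ℝ) :=
    Sc.biUnion (cornersOf hc) ∪ Sf.biUnion (cornersOf hf) with hΓdef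
  -- cardinality bound
  have hcardSc : (Sc.card : ℝ) ≤ nR / 4 ^ (d:ℕ) := by
    have h1 := card_box_le (d := d) hhc0 hhcR
    have h2 : 5 * R / hc = nR ^ (1/(d:ℝ)) / 4 := by
      rw [hhcdef]
      field_simp
      ring
    rw [h2] at h1
    calc (Sc.card : ℝ) ≤ (nR ^ (1/(d:ℝ)) / 4) ^ (d:ℕ) := h1
      _ = nR / 4 ^ (d:ℕ) := by rw [div_pow, hrootd nR hnR0.le]
  have hcardSf : (Sf.card : ℝ) ≤ nR / 2 ^ (2*d+2) := by
    have hvol : (Sf.card : ℝ≥0∞) * ENNReal.ofReal hf ^ (d:ℕ) ≤ volume U' :=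
      card_mul_le_vol hhf0 Sf U' (fun k hk => (Finset.mem_filter.1 hk).2)
    have h2 : (Sf.card : ℝ≥0∞) * ENNReal.ofReal hf ^ (d:ℕ) =
        ENNReal.ofReal ((Sf.card : ℝ) * hf ^ (d:ℕ)) := by
      rw [ENNReal.ofReal_mul (Nat.cast_nonneg _), ← ENNReal.ofReal_pow hhf0.le,
        ENNReal.ofReal_natCast]
    have h3 : ((Sf.card : ℝ) * hf ^ (d:ℕ)) ≤ δ := by
      rw [← ENNReal.ofReal_le_ofReal_iff hδ0.le, ← h2]
      exact hvol.trans hU'vol.le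
    have h4 : hf ^ (d:ℕ) = c / nR := hrootd _ (by positivity)
    rw [h4] at h3
    have hT : (0:ℝ) < 2 ^ (2*d+2) := by positivity
    rw [le_div_iff₀ hT]
    have h5 := mul_le_mul_of_nonneg_right h3 hnR0.le
    rw [mul_assoc, div_mul_cancel₀ c hnR0.ne'] at h5
    rw [hcdef] at h5
    nlinarith
  -- total cardinality
  have htwo : (2:ℝ) ≤ 2 ^ (d:ℕ) := by
    calc (2:ℝ) = 2 ^ (1:ℕ) := (pow_one 2).symm
      _ ≤ 2 ^ (d:ℕ) := pow_le_pow_right₀ (by norm_num) hd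
  have hcardΓ : Γ.card ≤ n := by
    have h1 : (Γ.card : ℝ) ≤ nR := by
      calc (Γ.card : ℝ) ≤ ((Sc.biUnion (cornersOf hc)).card : ℝ) +
            ((Sf.biUnion (cornersOf hf)).card : ℝ) := by
            exact_mod_cast Finset.card_union_le _ _
        _ ≤ (Sc.card * 2 ^ (d:ℕ) : ℝ) + (Sf.card * 2 ^ (d:ℕ) : ℝ) := by
            have g1 := card_biUnion_cornersOf_le hc Sc
            have g2 := card_biUnion_cornersOf_le hf Sf
            have g1' : ((Sc.biUnion (cornersOf hc)).card : ℝ) ≤ (Sc.card * 2 ^ (d:ℕ) : ℝ) := by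
              exact_mod_cast g1
            have g2' : ((Sf.biUnion (cornersOf hf)).card : ℝ) ≤ (Sf.card * 2 ^ (d:ℕ) : ℝ) := by
              exact_mod_cast g2
            linarith
        _ ≤ (nR / 4 ^ (d:ℕ)) * 2 ^ (d:ℕ) + (nR / 2 ^ (2*d+2)) * 2 ^ (d:ℕ) := by
            have hP2 : (0:ℝ) < 2 ^ (d:ℕ) := by positivity
            nlinarith
        _ ≤ nR / 2 + nR / 2 := by
            have hP2 : (0:ℝ) < 2 ^ (d:ℕ) := by positivity
            have e1 : (nR / 4 ^ (d:ℕ)) * 2 ^ (d:ℕ) ≤ nR / 2 := by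
              rw [div_mul_eq_mul_div, div_le_div_iff₀ (by positivity) two_pos]
              have h4 : (4:ℝ) ^ (d:ℕ) = 2 ^ (d:ℕ) * 2 ^ (d:ℕ) := by
                rw [← mul_pow]; norm_num
              rw [h4]
              nlinarith [mul_nonneg (mul_nonneg hnR0.le hP2.le) (sub_nonneg.2 htwo)]
            have e2 : (nR / 2 ^ (2*d+2)) * 2 ^ (d:ℕ) ≤ nR / 2 := by
              rw [div_mul_eq_mul_div, div_le_div_iff₀ (by positivity) two_pos]
              have h4 : (2:ℝ) ^ (2*d+2) = 2 ^ (d:ℕ) * 2 ^ (d:ℕ) * 4 := by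
                rw [show 2*d+2 = d+(d+2) by omega, pow_add, pow_add]; norm_num; ring
              rw [h4]
              nlinarith [mul_nonneg (mul_nonneg hnR0.le hP2.le) (sub_nonneg.2 htwo)]
            linarith
        _ = nR := by ring
    rw [hnRdef] at h1
    exact_mod_cast h1
  -- pointwise coarse bound
  have hcoarse : ∀ ξ ∈ sᶜ ∩ K, Fppow p Γ ξ ≤ ENNReal.ofReal (hc ^ p) := by
    intro ξ hξ
    exact Fppow_le_of_fidx_mem p hp hhc0 Sc ξ
      (fidx_mem_box hhc0 (hKnorm ξ hξ.2)) Γ Finset.subset_union_left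
  -- pointwise fine bound
  have hfine : ∀ ξ ∈ (sᶜ ∩ K) \ B m₀, Fppow p Γ ξ ≤ ENNReal.ofReal (hf ^ p) := by
    intro ξ hξ
    obtain ⟨hξSK, hξB⟩ := hξ
    have hsubU : icube hf (fidx hf ξ) ⊆ U' := by
      by_contra hcon
      obtain ⟨y, hy, hyU⟩ := Set.not_subset.1 hcon
      apply hξB
      refine ⟨hξSK, ?_⟩
      have hdist : dist ξ y ≤ hf := by
        rw [dist_pi_le_iff hhf0.le]
        intro i
        have h1 := mem_icube_fidx hhf0 ξ i (Set.mem_univ i)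
        have h2 := hy i (Set.mem_univ i)
        simp only [Set.mem_Ico] at h1 h2
        rw [Real.dist_eq, abs_le]
        constructor <;> linarith
      simp only [Set.mem_setOf_eq]
      calc Metric.infDist ξ U'ᶜ ≤ dist ξ y := Metric.infDist_le_dist_of_mem hyU
        _ ≤ hf := hdist
        _ ≤ h₀ := hhfh₀
    have hmem : fidx hf ξ ∈ Sf := by
      rw [hSfdef, Finset.mem_filter]
      exact ⟨fidx_mem_box hhf0 (hKnorm ξ hξSK.2), hsubU⟩
    exact Fppow_le_of_fidx_mem p hp hhf0 Sf ξ hmem Γ Finset.subset_union_right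
  -- integral bound
  set SS : Set (Fin d → ℝ) := sᶜ ∩ K with hSSdef
  have hSSm : MeasurableSet SS := hsm.compl.inter hK.isClosed.measurableSet
  have hPSSc : P SSᶜ = 0 := by
    rw [hSSdef, Set.compl_inter]
    refine le_antisymm (le_trans (measure_union_le _ _) ?_) zero_le
    rw [compl_compl, hPs, hPK, add_zero]
  have hkey : ∫⁻ ξ, Fppow p Γ ξ ∂P ≤
      ENNReal.ofReal (hf ^ p) + ENNReal.ofReal (hc ^ p) * ENNReal.ofReal ε₂ := by
    rw [← lintegral_add_compl (fun ξ => Fppow p Γ ξ) hSSm]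
    have hz : ∫⁻ ξ in SSᶜ, Fppow p Γ ξ ∂P = 0 := setLIntegral_measure_zero _ _ hPSSc
    rw [hz, add_zero]
    have hsplit : SS = (SS \ B m₀) ∪ (SS ∩ B m₀) := (Set.diff_union_inter SS (B m₀)).symm
    rw [hsplit, lintegral_union (hSSm.inter (hBmeas m₀)) Set.disjoint_sdiff_inter]
    gcongr
    · calc ∫⁻ ξ in SS \ B m₀, Fppow p Γ ξ ∂P
          ≤ ∫⁻ _ in SS \ B m₀, ENNReal.ofReal (hf ^ p) ∂P :=
            setLIntegral_mono' (hSSm.diff (hBmeas m₀)) (fun ξ hξ => hfine ξ hξ)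
        _ = ENNReal.ofReal (hf ^ p) * P (SS \ B m₀) := setLIntegral_const _ _
        _ ≤ ENNReal.ofReal (hf ^ p) * 1 := by
            gcongr
            exact prob_le_one
        _ = ENNReal.ofReal (hf ^ p) := mul_one _
    · calc ∫⁻ ξ in SS ∩ B m₀, Fppow p Γ ξ ∂P
          ≤ ∫⁻ _ in SS ∩ B m₀, ENNReal.ofReal (hc ^ p) ∂P :=
            setLIntegral_mono' (hSSm.inter (hBmeas m₀)) (fun ξ hξ => hcoarse ξ hξ.1)
        _ = ENNReal.ofReal (hc ^ p) * P (SS ∩ B m₀) := setLIntegral_const _ _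
        _ ≤ ENNReal.ofReal (hc ^ p) * ENNReal.ofReal ε₂ := by
            gcongr
            exact le_trans (measure_mono Set.inter_subset_right) hm₀.le
  have hdnp : dnpPow n p P ≤
      ENNReal.ofReal (hf ^ p) + ENNReal.ofReal (hc ^ p) * ENNReal.ofReal ε₂ :=
    le_trans (iInf₂_le Γ hcardΓ) hkey
  -- final arithmetic
  have hrpd0 : (0:ℝ) < nR ^ (p/(d:ℝ)) := Real.rpow_pos_of_pos hnR0 _
  have hNe : (n : ℝ≥0∞) ^ (p/(d:ℝ)) = ENNReal.ofReal (nR ^ (p/(d:ℝ))) := by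
    rw [← ENNReal.ofReal_natCast n, ENNReal.ofReal_rpow_of_pos hnR0]
  have hrootpow : ∀ x : ℝ, 0 ≤ x → (x ^ (1/(d:ℝ))) ^ p = x ^ (p/(d:ℝ)) := by
    intro x hx
    rw [← Real.rpow_mul hx]
    congr 1
    field_simp
  have key1 : nR ^ (p/(d:ℝ)) * hf ^ p = er / 2 := by
    rw [hhfdef, hrootpow _ (by positivity), ← Real.mul_rpow hnR0.le (by positivity),
      mul_div_cancel₀ c hnR0.ne', hcval, ← Real.rpow_mul (by positivity),
      div_mul_div_comm, mul_comm (d:ℝ) p, div_self (by positivity : p * (d:ℝ) ≠ 0),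
      Real.rpow_one]
  have key2 : nR ^ (p/(d:ℝ)) * hc ^ p = (20*R) ^ p := by
    rw [hhcdef, Real.div_rpow (by positivity) (by positivity), hrootpow _ hnR0.le,
      mul_div_cancel₀ _ hrpd0.ne']
  have key3 : (20*R) ^ p * ε₂ = er / 2 := by
    rw [hε₂def, mul_div_cancel₀ _ (Real.rpow_pos_of_pos (by positivity) p).ne']
  have hfinal : (n : ℝ≥0∞) ^ (p/(d:ℝ)) * dnpPow n p P ≤ e := by
    calc (n : ℝ≥0∞) ^ (p/(d:ℝ)) * dnpPow n p P
        ≤ ENNReal.ofReal (nR ^ (p/(d:ℝ))) *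
          (ENNReal.ofReal (hf ^ p) + ENNReal.ofReal (hc ^ p) * ENNReal.ofReal ε₂) := by
          rw [hNe]
          exact mul_le_mul_right hdnp _
      _ = ENNReal.ofReal (nR ^ (p/(d:ℝ)) * hf ^ p) +
          ENNReal.ofReal (nR ^ (p/(d:ℝ)) * hc ^ p) * ENNReal.ofReal ε₂ := by
          rw [mul_add, ← ENNReal.ofReal_mul hrpd0.le, ← mul_assoc,
            ← ENNReal.ofReal_mul hrpd0.le]
      _ = ENNReal.ofReal (er/2) + ENNReal.ofReal (er/2) := by
          rw [key1, key2, ← ENNReal.ofReal_mul (by positivity), key3]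
      _ = ENNReal.ofReal er := by
          rw [← ENNReal.ofReal_add (by linarith) (by linarith)]
          norm_num
      _ = e := by rw [herdef, ENNReal.ofReal_toReal heT]
  exact le_trans hfinal (min_le_left _ _)

end
end

section
/- Let 1 ≤ r ≤ p < ∞. Then for every dimension d, the dual quantization coefficient for the ℓ^r norm satisfies Q^{dq}_{|·|_{ℓ^r}, p, d} ≤ d^{1/r} · Q^{dq}_{|·|, p, 1}, where Q^{dq}_{‖·‖,p,d} = inf_n n^{1/d} d_{n,p}(U([0,1]^d)) computed with norm ‖·‖ on ℝ^d. -/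
open MeasureTheory ENNReal Filter

noncomputable section

/-- `F_p(ξ;Γ)^p` in `ℝ^d`, where distances are measured with the gauge `N`. -/
def FppowN {d : ℕ} (N : (Fin d → ℝ) → ℝ) (p : ℝ)
    (Γ : Finset (Fin d → ℝ)) (ξ : Fin d → ℝ) : ℝ≥0∞ :=
  sInf { c | ∃ w : (Fin d → ℝ) → ℝ, (∀ x ∈ Γ, 0 ≤ w x) ∧ (∀ x ∈ Γ, w x ≤ 1) ∧
    (∑ x ∈ Γ, w x) = 1 ∧ (∑ x ∈ Γ, w x • x) = ξ ∧
    c = ENNReal.ofReal (∑ x ∈ Γ, w x * (N (ξ - x)) ^ p) }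

/-- `d_{n,p}(P)^p` for the gauge `N`. -/
def dnpPowN {d : ℕ} (N : (Fin d → ℝ) → ℝ) (n : ℕ) (p : ℝ)
    (P : Measure (Fin d → ℝ)) : ℝ≥0∞ :=
  ⨅ (Γ : Finset (Fin d → ℝ)) (_ : Γ.card ≤ n), ∫⁻ ξ, FppowN N p Γ ξ ∂P

def unif {d : ℕ} (s : Set (Fin d → ℝ)) : Measure (Fin d → ℝ) :=
  (volume s)⁻¹ • volume.restrict s

/-- The dual quantization coefficient
`Q^{dq}_{N,p,d} = inf_n n^{1/d} d_{n,p}(U([0,1]^d))`, computed for the gauge `N`. -/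
def Qdq (d : ℕ) (N : (Fin d → ℝ) → ℝ) (p : ℝ) : ℝ≥0∞ :=
  ⨅ n : ℕ, ((n + 1 : ℕ) : ℝ≥0∞) ^ ((1 : ℝ) / d) *
    (dnpPowN N (n + 1) p (unif (Set.Icc (0 : Fin d → ℝ) 1))) ^ ((1 : ℝ) / p)

/-- The `ℓ^r` norm on `ℝ^d`. -/
def lrNorm (d : ℕ) (r : ℝ) (x : Fin d → ℝ) : ℝ :=
  (∑ i, |x i| ^ r) ^ (1 / r)

lemma FppowN_eq_sInf_subtype {d : ℕ} (N : (Fin d → ℝ) → ℝ) (p : ℝ)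
    (Γ : Finset (Fin d → ℝ)) (ξ : Fin d → ℝ) :
    FppowN N p Γ ξ = sInf { c | ∃ v : {x // x ∈ Γ} → ℝ,
      (∀ y, 0 ≤ v y) ∧ (∀ y, v y ≤ 1) ∧ (∑ y ∈ Γ.attach, v y) = 1 ∧
      (∑ y ∈ Γ.attach, v y • (y : Fin d → ℝ)) = ξ ∧
      c = ENNReal.ofReal (∑ y ∈ Γ.attach, v y * (N (ξ - (y : Fin d → ℝ))) ^ p) } := by
  classical
  unfold FppowN
  congr 1
  ext c
  constructor
  · rintro ⟨w, h0, h1, hs, hb, hc⟩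
    refine ⟨fun y => w y, fun y => h0 y y.2, fun y => h1 y y.2, ?_, ?_, ?_⟩
    · rw [Finset.sum_attach Γ (fun x => w x)]; exact hs
    · rw [Finset.sum_attach Γ (fun x => w x • x)]; exact hb
    · rw [Finset.sum_attach Γ (fun x => w x * (N (ξ - x)) ^ p)]; exact hc
  · rintro ⟨v, h0, h1, hs, hb, hc⟩
    refine ⟨fun x => if h : x ∈ Γ then v ⟨x, h⟩ else 0, ?_, ?_, ?_, ?_, ?_⟩
    · intro x hx; simp only []; rw [dif_pos hx]; exact h0 _
    · intro x hx; simp only []; rw [dif_pos hx]; exact h1 _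
    · rw [← Finset.sum_attach Γ (fun x => if h : x ∈ Γ then v ⟨x, h⟩ else 0)]
      simpa using hs
    · rw [← Finset.sum_attach Γ (fun x => (if h : x ∈ Γ then v ⟨x, h⟩ else 0) • x)]
      simpa using hb
    · rw [← Finset.sum_attach Γ (fun x => (if h : x ∈ Γ then v ⟨x, h⟩ else 0) * (N (ξ - x)) ^ p)]
      simpa using hc

lemma lrNorm_rpow_le {d : ℕ} (hd : 1 ≤ d) {r p : ℝ} (hr : 1 ≤ r) (hrp : r ≤ p) (y : Fin d → ℝ) :
    lrNorm d r y ^ p ≤ (d : ℝ) ^ (p / r - 1) * ∑ j, |y j| ^ p := by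
  have hr0 : (0:ℝ) < r := lt_of_lt_of_le one_pos hr
  have hp0 : (0:ℝ) < p := lt_of_lt_of_le (lt_of_lt_of_le one_pos hr) hrp
  have hd0 : (0:ℝ) < d := by exact_mod_cast Nat.lt_of_lt_of_le Nat.zero_lt_one hd
  set s : ℝ := p / r with hs
  have hs1 : 1 ≤ s := (one_le_div hr0).mpr hrp
  set a : Fin d → ℝ := fun j => |y j| ^ r with ha
  have ha0 : ∀ j, 0 ≤ a j := fun j => Real.rpow_nonneg (abs_nonneg _) _
  have hsum0 : 0 ≤ ∑ j, a j := Finset.sum_nonneg fun j _ => ha0 j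
  have h1 : lrNorm d r y ^ p = (∑ j, a j) ^ s := by
    rw [lrNorm, ← Real.rpow_mul hsum0]
    congr 1
    rw [hs]; ring
  have key := Real.rpow_arith_mean_le_arith_mean_rpow Finset.univ (fun _ => 1/(d:ℝ)) a
    (fun i _ => by positivity) (by
      simp [Finset.sum_const, Finset.card_univ]
      field_simp) (fun i _ => ha0 i) hs1
  have hzs : ∀ j, a j ^ s = |y j| ^ p := by
    intro j
    rw [ha, ← Real.rpow_mul (abs_nonneg _)]
    congr 1
    rw [hs]
    field_simp
  rw [← Finset.mul_sum] at key
  have key2 : ((1:ℝ)/(d:ℝ))^s * (∑ j, a j)^s ≤ (1/(d:ℝ)) * ∑ j, |y j| ^ p := by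
    rw [← Real.mul_rpow (by positivity) hsum0]
    refine key.trans (le_of_eq ?_)
    rw [Finset.mul_sum]
    exact Finset.sum_congr rfl fun i _ => by rw [hzs i]
  set T : ℝ := ∑ j, |y j| ^ p with hT
  have hT0 : 0 ≤ T := Finset.sum_nonneg fun j _ => Real.rpow_nonneg (abs_nonneg _) _
  rw [h1]
  calc (∑ j, a j) ^ s = ((d:ℝ)^s * (1/(d:ℝ))^s) * (∑ j, a j)^s := by
        rw [← Real.mul_rpow hd0.le (by positivity), mul_one_div_cancel hd0.ne', Real.one_rpow,
          one_mul]
    _ = (d:ℝ)^s * ((1/(d:ℝ))^s * (∑ j, a j)^s) := by ring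
    _ ≤ (d:ℝ)^s * ((1/(d:ℝ)) * T) :=
        mul_le_mul_of_nonneg_left key2 (Real.rpow_nonneg hd0.le _)
    _ = (d:ℝ)^(s-1) * T := by
        rw [Real.rpow_sub hd0, Real.rpow_one]; ring

lemma FppowN_measurable {d : ℕ} {N : (Fin d → ℝ) → ℝ} (hN : Continuous N) {p : ℝ} (hp : 0 ≤ p)
    (Γ : Finset (Fin d → ℝ)) : Measurable (FppowN N p Γ) := by
  classical
  set b : ({x // x ∈ Γ} → ℝ) → (Fin d → ℝ) :=
    fun v => ∑ y ∈ Γ.attach, v y • (y : Fin d → ℝ) with hbdef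
  set cost : ({x // x ∈ Γ} → ℝ) → ℝ :=
    fun v => ∑ y ∈ Γ.attach, v y * (N (b v - (y : Fin d → ℝ))) ^ p with hcdef
  have hbcont : Continuous b :=
    continuous_finset_sum _ (fun y _ => (continuous_apply y).smul continuous_const)
  have hcostc : Continuous cost := by
    refine continuous_finset_sum _ (fun y _ => (continuous_apply y).mul ?_)
    exact (hN.comp (hbcont.sub continuous_const)).rpow_const (fun v => Or.inr hp)
  set D : Set ({x // x ∈ Γ} → ℝ) := (Set.Icc 0 1) ∩ {v | ∑ y ∈ Γ.attach, v y = 1} with hD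
  have hDcomp : IsCompact D := (isCompact_Icc).inter_right
    (isClosed_eq (continuous_finset_sum _ fun y _ => continuous_apply y) continuous_const)
  have hC : IsCompact ((fun v => (b v, cost v)) '' D) := hDcomp.image (hbcont.prodMk hcostc)
  apply measurable_of_Iic
  intro y
  by_cases hy : y = ⊤
  · simp [hy]
  have hkey : FppowN N p Γ ⁻¹' (Set.Iic y) =
      Prod.fst '' (((fun v => (b v, cost v)) '' D) ∩ {q | q.2 ≤ y.toReal}) := by
    ext ξ
    simp only [Set.mem_preimage, Set.mem_Iic]
    constructor
    · intro hle
      rw [FppowN_eq_sInf_subtype] at hle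
      have hne : { c | ∃ v : {x // x ∈ Γ} → ℝ,
          (∀ z, 0 ≤ v z) ∧ (∀ z, v z ≤ 1) ∧ (∑ z ∈ Γ.attach, v z) = 1 ∧
          (∑ z ∈ Γ.attach, v z • (z : Fin d → ℝ)) = ξ ∧
          c = ENNReal.ofReal (∑ z ∈ Γ.attach, v z * (N (ξ - (z : Fin d → ℝ))) ^ p) }.Nonempty := by
        by_contra h
        rw [Set.not_nonempty_iff_eq_empty] at h
        rw [h, sInf_empty] at hle
        exact hy (top_le_iff.mp hle)
      obtain ⟨c₀, v₀, h0, h1, hsum, hbar, rfl⟩ := hne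
      have hv₀D : v₀ ∈ D := ⟨Set.mem_Icc.mpr ⟨fun z => h0 z, fun z => h1 z⟩, hsum⟩
      have hFibc : IsCompact (D ∩ b ⁻¹' {ξ}) :=
        hDcomp.inter_right (isClosed_singleton.preimage hbcont)
      obtain ⟨vm, hvmmem, hvmmin⟩ := hFibc.exists_isMinOn ⟨v₀, hv₀D, hbar⟩ hcostc.continuousOn
      have hbvm : b vm = ξ := hvmmem.2
      have hlow : ENNReal.ofReal (cost vm) ≤ y := by
        refine le_trans (le_sInf ?_) hle
        rintro c ⟨v, hv0, hv1, hvs, hvb, rfl⟩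
        have : cost vm ≤ cost v :=
          hvmmin ⟨⟨Set.mem_Icc.mpr ⟨fun z => hv0 z, fun z => hv1 z⟩, hvs⟩, hvb⟩
        refine ENNReal.ofReal_le_ofReal (this.trans (le_of_eq ?_))
        have hbv : b v = ξ := hvb
        simp only [hcdef, hbv]
      refine ⟨(ξ, cost vm), ⟨⟨vm, hvmmem.1, by show (b vm, cost vm) = (ξ, cost vm); rw [hbvm]⟩, ?_⟩, rfl⟩
      exact (ENNReal.ofReal_le_iff_le_toReal hy).mp hlow
    · rintro ⟨q, ⟨⟨v, hvD, rfl⟩, hq2⟩, rfl⟩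
      rw [FppowN_eq_sInf_subtype]
      refine le_trans (sInf_le ?_) ((ENNReal.ofReal_le_ofReal hq2).trans ENNReal.ofReal_toReal_le)
      exact ⟨v, fun z => (Set.mem_Icc.mp hvD.1).1 z, fun z => (Set.mem_Icc.mp hvD.1).2 z,
        hvD.2, rfl, rfl⟩
  rw [hkey]
  exact (((hC.inter_right (isClosed_le continuous_snd continuous_const)).image
    continuous_fst).isClosed).measurableSet

def gridEmb (d : ℕ) : (Fin d → (Fin 1 → ℝ)) → (Fin d → ℝ) := fun f i => f i 0

lemma gridEmb_inj (d : ℕ) : Function.Injective (gridEmb d) := by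
  intro f g h
  funext i k
  have h0 : f i 0 = g i 0 := congrFun h i
  have hk : k = 0 := Subsingleton.elim k 0
  rw [hk]; exact h0

lemma glue {d : ℕ} (hd : 1 ≤ d) {r p : ℝ} (hr : 1 ≤ r) (hrp : r ≤ p)
    (Γ' : Finset (Fin 1 → ℝ)) (ξ : Fin d → ℝ)
    (w : Fin d → (Fin 1 → ℝ) → ℝ)
    (hw0 : ∀ j, ∀ x ∈ Γ', 0 ≤ w j x) (hw1 : ∀ j, ∀ x ∈ Γ', w j x ≤ 1)
    (hws : ∀ j, (∑ x ∈ Γ', w j x) = 1)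
    (hwb : ∀ j, (∑ x ∈ Γ', w j x • x) = (fun _ => ξ j)) :
    FppowN (lrNorm d r) p ((Fintype.piFinset fun _ : Fin d => Γ').image (gridEmb d)) ξ ≤
      ENNReal.ofReal ((d:ℝ) ^ (p/r - 1)) *
        ∑ j, ENNReal.ofReal (∑ y ∈ Γ', w j y * |ξ j - y 0| ^ p) := by
  classical
  have hp0 : (0:ℝ) < p := lt_of_lt_of_le (lt_of_lt_of_le one_pos hr) hrp
  have hd0 : (0:ℝ) < d := by exact_mod_cast Nat.lt_of_lt_of_le Nat.zero_lt_one hd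
  set c' : ℝ := (d:ℝ) ^ (p/r - 1) with hc'
  have hc'0 : 0 ≤ c' := Real.rpow_nonneg hd0.le _
  set e := gridEmb d
  set PF := Fintype.piFinset fun _ : Fin d => Γ' with hPF
  set Γ : Finset (Fin d → ℝ) := PF.image e with hΓ
  set W : (Fin d → ℝ) → ℝ := fun x => ∏ j, w j (fun _ => x j) with hW
  have heW : ∀ f : Fin d → (Fin 1 → ℝ), W (e f) = ∏ j, w j (f j) := by
    intro f
    refine Finset.prod_congr rfl fun j _ => ?_
    congr 1
    funext k
    have hk : k = 0 := Subsingleton.elim k 0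
    rw [hk]; rfl
  have hb0 : ∀ j, (∑ y ∈ Γ', w j y * y 0) = ξ j := by
    intro j
    have := congrFun (hwb j) 0
    simpa [Finset.sum_apply] using this
  have hsum_img : ∀ (g : (Fin d → ℝ) → ℝ), ∑ x ∈ Γ, g x = ∑ f ∈ PF, g (e f) :=
    fun g => Finset.sum_image (fun a _ b _ hab => gridEmb_inj d hab)
  have hfactor : ∀ (g : Fin d → ℝ → ℝ) (k : Fin d),
      (∑ f ∈ PF, (∏ j, w j (f j)) * g k (f k 0)) = ∑ y ∈ Γ', w k y * g k (y 0) := by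
    intro g k
    have step1 : ∀ f : Fin d → (Fin 1 → ℝ), (∏ j, w j (f j)) * g k (f k 0)
        = ∏ j, (w j (f j) * if j = k then g k (f j 0) else 1) := by
      intro f
      rw [Finset.prod_mul_distrib]
      congr 1
      rw [Finset.prod_ite_eq' Finset.univ k (fun j => g k (f j 0))]
      simp
    have step2 : ∀ j, (∑ y ∈ Γ', w j y * if j = k then g k (y 0) else 1)
        = if j = k then (∑ y ∈ Γ', w k y * g k (y 0)) else 1 := by
      intro j
      by_cases h : j = k
      · subst h; simp
      · simp [h, hws j]
    calc (∑ f ∈ PF, (∏ j, w j (f j)) * g k (f k 0))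
        = ∑ f ∈ Fintype.piFinset (fun _ : Fin d => Γ'),
            ∏ j, (w j (f j) * if j = k then g k (f j 0) else 1) := by
          rw [hPF]; exact Finset.sum_congr rfl fun f _ => step1 f
      _ = ∏ j, ∑ y ∈ Γ', (w j y * if j = k then g k (y 0) else 1) :=
          (Finset.prod_univ_sum (fun _ : Fin d => Γ')
            (fun j y => w j y * if j = k then g k (y 0) else 1)).symm
      _ = ∏ j, (if j = k then (∑ y ∈ Γ', w k y * g k (y 0)) else 1) :=
          Finset.prod_congr rfl fun j _ => step2 j
      _ = ∑ y ∈ Γ', w k y * g k (y 0) := by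
          rw [Finset.prod_ite_eq' Finset.univ k _]; simp
  -- the five feasibility conditions
  have h0 : ∀ x ∈ Γ, 0 ≤ W x := by
    intro x hx
    obtain ⟨f, hf, rfl⟩ := Finset.mem_image.mp hx
    rw [heW]
    exact Finset.prod_nonneg fun j _ => hw0 j _ (Fintype.mem_piFinset.mp hf j)
  have h1 : ∀ x ∈ Γ, W x ≤ 1 := by
    intro x hx
    obtain ⟨f, hf, rfl⟩ := Finset.mem_image.mp hx
    rw [heW]
    exact Finset.prod_le_one (fun j _ => hw0 j _ (Fintype.mem_piFinset.mp hf j))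
      (fun j _ => hw1 j _ (Fintype.mem_piFinset.mp hf j))
  have hsW : (∑ x ∈ Γ, W x) = 1 := by
    rw [hsum_img, Finset.sum_congr rfl fun f _ => heW f, hPF]
    rw [← Finset.prod_univ_sum (fun _ : Fin d => Γ') (fun j y => w j y)]
    simp [hws]
  have hbW : (∑ x ∈ Γ, W x • x) = ξ := by
    funext k
    rw [Finset.sum_apply]
    have : (∑ x ∈ Γ, (W x • x) k) = ∑ x ∈ Γ, W x * x k := by
      refine Finset.sum_congr rfl fun x _ => rfl
    rw [this, hsum_img (fun x => W x * x k),
      Finset.sum_congr rfl (fun f _ => by rw [heW]; rfl :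
        ∀ f ∈ PF, W (e f) * (e f) k = (∏ j, w j (f j)) * (f k 0)),
      hfactor (fun _ t => t) k, hb0 k]
  have hcost : (∑ x ∈ Γ, W x * lrNorm d r (ξ - x) ^ p)
      ≤ c' * ∑ j, (∑ y ∈ Γ', w j y * |ξ j - y 0| ^ p) := by
    rw [hsum_img (fun x => W x * lrNorm d r (ξ - x) ^ p)]
    have hstep : (∑ f ∈ PF, W (e f) * lrNorm d r (ξ - e f) ^ p)
        ≤ ∑ f ∈ PF, (∏ j, w j (f j)) * (c' * ∑ k, |ξ k - f k 0| ^ p) := by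
      refine Finset.sum_le_sum fun f hf => ?_
      rw [heW]
      have hWnn : 0 ≤ ∏ j, w j (f j) :=
        Finset.prod_nonneg fun j _ => hw0 j _ (Fintype.mem_piFinset.mp hf j)
      refine mul_le_mul_of_nonneg_left ?_ hWnn
      have := lrNorm_rpow_le hd hr hrp (ξ - e f)
      exact this
    refine hstep.trans (le_of_eq ?_)
    calc (∑ f ∈ PF, (∏ j, w j (f j)) * (c' * ∑ k, |ξ k - f k 0| ^ p))
        = ∑ f ∈ PF, ∑ k, c' * ((∏ j, w j (f j)) * |ξ k - f k 0| ^ p) := by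
          refine Finset.sum_congr rfl fun f _ => ?_
          simp only [Finset.mul_sum]
          exact Finset.sum_congr rfl fun k _ => by ring
      _ = ∑ k, ∑ f ∈ PF, c' * ((∏ j, w j (f j)) * |ξ k - f k 0| ^ p) := Finset.sum_comm
      _ = ∑ k, c' * ∑ f ∈ PF, (∏ j, w j (f j)) * |ξ k - f k 0| ^ p := by
          refine Finset.sum_congr rfl fun k _ => ?_
          rw [Finset.mul_sum]
      _ = ∑ k, c' * ∑ y ∈ Γ', w k y * |ξ k - y 0| ^ p := by
          refine Finset.sum_congr rfl fun k _ => ?_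
          rw [hfactor (fun k t => |ξ k - t| ^ p) k]
      _ = c' * ∑ k, ∑ y ∈ Γ', w k y * |ξ k - y 0| ^ p := by rw [← Finset.mul_sum]
  -- conclude
  have hmem : ENNReal.ofReal (∑ x ∈ Γ, W x * (lrNorm d r (ξ - x)) ^ p) ∈
      { c | ∃ w : (Fin d → ℝ) → ℝ, (∀ x ∈ Γ, 0 ≤ w x) ∧ (∀ x ∈ Γ, w x ≤ 1) ∧
        (∑ x ∈ Γ, w x) = 1 ∧ (∑ x ∈ Γ, w x • x) = ξ ∧
        c = ENNReal.ofReal (∑ x ∈ Γ, w x * (lrNorm d r (ξ - x)) ^ p) } :=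
    ⟨W, h0, h1, hsW, hbW, rfl⟩
  refine le_trans (sInf_le hmem) ?_
  rw [← ENNReal.ofReal_sum_of_nonneg (fun j _ => Finset.sum_nonneg fun y hy =>
    mul_nonneg (hw0 j y hy) (Real.rpow_nonneg (abs_nonneg _) _)),
    ← ENNReal.ofReal_mul hc'0]
  exact ENNReal.ofReal_le_ofReal hcost

lemma le_mul_sum_sInf {ι : Type*} [Fintype ι] (a c : ℝ≥0∞) (hc0 : c ≠ 0) (hctop : c ≠ ⊤)
    (S : ι → Set ℝ≥0∞)
    (h : ∀ f : ι → ℝ≥0∞, (∀ i, f i ∈ S i) → a ≤ c * ∑ i, f i) :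
    a ≤ c * ∑ i, sInf (S i) := by
  classical
  cases isEmpty_or_nonempty ι with
  | inl hempty =>
    simpa using h (fun i => 0) (fun i => (IsEmpty.false i).elim)
  | inr hne =>
    by_cases hSne : ∀ i, (S i).Nonempty
    · refine ENNReal.le_of_forall_pos_le_add fun ε hε hlt => ?_
      have hsum_lt : (∑ i, sInf (S i)) < ⊤ := by
        by_contra htop
        push_neg at htop
        rw [top_le_iff.mp htop, ENNReal.mul_top hc0] at hlt
        exact (lt_irrefl _ hlt)
      have hterm_lt : ∀ i, sInf (S i) < ⊤ := fun i =>
        lt_of_le_of_lt (Finset.single_le_sum (f := fun j => sInf (S j))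
          (fun j _ => zero_le) (Finset.mem_univ i)) hsum_lt
      set n : ℕ := Fintype.card ι with hn
      have hnpos : 0 < n := Fintype.card_pos
      set δ : ℝ≥0∞ := (ε : ℝ≥0∞) / (c * n) with hδ
      have hcn0 : c * n ≠ 0 := by
        simp [hc0, hnpos.ne']
      have hcntop : c * n ≠ ⊤ := by
        exact ENNReal.mul_ne_top hctop (by simp)
      have hδ0 : δ ≠ 0 := by
        simp only [hδ]
        rw [ENNReal.div_ne_zero]
        exact ⟨by exact_mod_cast hε.ne', hcntop⟩
      have hchoice : ∀ i, ∃ x ∈ S i, x < sInf (S i) + δ := by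
        intro i
        have : sInf (S i) < sInf (S i) + δ :=
          ENNReal.lt_add_right (hterm_lt i).ne hδ0
        exact sInf_lt_iff.mp this
      choose f hf1 hf2 using hchoice
      have step := h f hf1
      have hsum_le : (∑ i, f i) ≤ (∑ i, sInf (S i)) + n * δ := by
        calc (∑ i, f i) ≤ ∑ i, (sInf (S i) + δ) := Finset.sum_le_sum fun i _ => (hf2 i).le
          _ = (∑ i, sInf (S i)) + n * δ := by
            rw [Finset.sum_add_distrib]
            congr 1
            simp [hn, mul_comm]
      calc a ≤ c * ∑ i, f i := step
        _ ≤ c * ((∑ i, sInf (S i)) + n * δ) := by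
            exact mul_le_mul_right hsum_le c
        _ = c * (∑ i, sInf (S i)) + c * n * δ := by rw [mul_add, mul_assoc]
        _ = c * (∑ i, sInf (S i)) + ε := by
            congr 1
            rw [hδ, ENNReal.mul_div_cancel hcn0 hcntop]
    · push_neg at hSne
      obtain ⟨i, hi⟩ := hSne
      have : sInf (S i) = ⊤ := by
        have hie : S i = ∅ := hi
        simp [hie]
      have hsum : (∑ j, sInf (S j)) = ⊤ :=
        ENNReal.sum_eq_top.mpr ⟨i, Finset.mem_univ i, this⟩
      rw [hsum, ENNReal.mul_top hc0]
      exact le_top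

lemma pi_map_eval {d : ℕ} (μ : Fin d → Measure ℝ) [∀ i, IsProbabilityMeasure (μ i)] (j : Fin d) :
    (Measure.pi μ).map (fun ξ => ξ j) = μ j := by
  refine Measure.ext fun s hs => ?_
  rw [Measure.map_apply (measurable_pi_apply j) hs]
  have hpre : (fun ξ : Fin d → ℝ => ξ j) ⁻¹' s
      = Set.pi Set.univ (Function.update (fun _ => Set.univ) j s) := by
    ext ξ
    simp only [Set.mem_preimage, Set.mem_pi, Set.mem_univ, true_implies, Function.update_apply]
    constructor
    · intro h i
      by_cases hij : i = j
      · subst hij; simpa using h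
      · simp [hij]
    · intro h
      simpa using h j
  rw [hpre, Measure.pi_pi]
  rw [Finset.prod_eq_single j (fun b _ hbj => by simp [Function.update_apply, hbj])
    (fun hj => absurd (Finset.mem_univ j) hj)]
  simp

lemma pi_restrict {d : ℕ} (μ : Fin d → Measure ℝ) [∀ i, SigmaFinite (μ i)]
    (t : Fin d → Set ℝ) (ht : ∀ i, MeasurableSet (t i)) :
    (Measure.pi μ).restrict (Set.pi Set.univ t) = Measure.pi (fun i => (μ i).restrict (t i)) := by
  refine (Measure.pi_eq fun s hs => ?_).symm
  rw [Measure.restrict_apply (MeasurableSet.univ_pi hs), ← Set.pi_inter_distrib, Measure.pi_pi]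
  exact Finset.prod_congr rfl fun i _ => (Measure.restrict_apply (hs i)).symm

instance : IsProbabilityMeasure (volume.restrict (Set.Icc (0:ℝ) 1)) := by
  constructor
  rw [Measure.restrict_apply_univ, Real.volume_Icc]
  norm_num

lemma Icc_cube_eq_pi (d : ℕ) :
    Set.Icc (0 : Fin d → ℝ) 1 = Set.pi Set.univ (fun _ => Set.Icc (0:ℝ) 1) := by
  ext ξ
  simp [Set.mem_Icc, Pi.le_def, Set.mem_pi, forall_and]

lemma volume_cube (d : ℕ) : volume (Set.Icc (0 : Fin d → ℝ) 1) = 1 := by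
  rw [Real.volume_Icc_pi]
  simp

lemma unif_cube (d : ℕ) : unif (Set.Icc (0 : Fin d → ℝ) 1)
    = Measure.pi (fun _ : Fin d => volume.restrict (Set.Icc (0:ℝ) 1)) := by
  rw [unif, volume_cube]
  simp only [inv_one, one_smul]
  rw [Icc_cube_eq_pi, MeasureTheory.volume_pi,
    pi_restrict (fun _ => volume) (fun _ => Set.Icc (0:ℝ) 1) (fun _ => measurableSet_Icc)]

lemma lintegral_unif_one (G : (Fin 1 → ℝ) → ℝ≥0∞) (hG : Measurable G) :
    ∫⁻ x, G x ∂(unif (Set.Icc (0 : Fin 1 → ℝ) 1))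
      = ∫⁻ t, G (fun _ => t) ∂(volume.restrict (Set.Icc (0:ℝ) 1)) := by
  have h1 : unif (Set.Icc (0 : Fin 1 → ℝ) 1) = volume.restrict (Set.Icc (0 : Fin 1 → ℝ) 1) := by
    rw [unif, volume_cube]; simp
  rw [h1]
  set me := MeasurableEquiv.funUnique (Fin 1) ℝ with hme
  have hmp : MeasurePreserving me.symm volume volume :=
    (volume_preserving_funUnique (Fin 1) ℝ).symm me
  have hvol : (volume : Measure (Fin 1 → ℝ)) = volume.map me.symm := hmp.map_eq.symm
  have hpre : me.symm ⁻¹' (Set.Icc (0 : Fin 1 → ℝ) 1) = Set.Icc (0:ℝ) 1 := by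
    ext t
    simp only [Set.mem_preimage, Set.mem_Icc, Pi.le_def]
    constructor
    · intro h
      exact ⟨by simpa [hme] using h.1 0, by simpa [hme] using h.2 0⟩
    · intro h
      exact ⟨fun i => by simpa [hme] using h.1, fun i => by simpa [hme] using h.2⟩
  rw [hvol, Measure.restrict_map me.symm.measurable measurableSet_Icc,
    lintegral_map hG me.symm.measurable, hpre]
  rfl

lemma lintegral_sum_eval {d : ℕ} (G : (Fin 1 → ℝ) → ℝ≥0∞) (hG : Measurable G) :
    ∫⁻ ξ, ∑ j, G (fun _ => ξ j) ∂(unif (Set.Icc (0 : Fin d → ℝ) 1))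
      = (d : ℝ≥0∞) * ∫⁻ x, G x ∂(unif (Set.Icc (0 : Fin 1 → ℝ) 1)) := by
  have hGj : ∀ j : Fin d, Measurable (fun ξ : Fin d → ℝ => G (fun _ => ξ j)) := fun j =>
    hG.comp (measurable_pi_lambda _ (fun _ => measurable_pi_apply j))
  rw [unif_cube d, lintegral_finset_sum _ (fun j _ => hGj j)]
  have hterm : ∀ j : Fin d, (∫⁻ ξ, G (fun _ => ξ j)
      ∂(Measure.pi (fun _ : Fin d => volume.restrict (Set.Icc (0:ℝ) 1))))
      = ∫⁻ t, G (fun _ => t) ∂(volume.restrict (Set.Icc (0:ℝ) 1)) := by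
    intro j
    have hf : Measurable (fun t : ℝ => G (fun _ => t)) :=
      hG.comp (measurable_pi_lambda _ (fun _ => measurable_id))
    rw [← lintegral_map hf (measurable_pi_apply j),
      pi_map_eval (fun _ : Fin d => volume.restrict (Set.Icc (0:ℝ) 1)) j]
  rw [Finset.sum_congr rfl fun j _ => hterm j, Finset.sum_const, Finset.card_univ,
    Fintype.card_fin, lintegral_unif_one G hG]
  simp [mul_comm]

lemma le_mul_iInf' {ι : Sort*} {a c : ℝ≥0∞} (hc0 : c ≠ 0) (hct : c ≠ ⊤) {f : ι → ℝ≥0∞}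
    (h : ∀ x, a ≤ c * f x) : a ≤ c * ⨅ x, f x := by
  have h1 : a ≤ ⨅ x, c * f x := le_iInf h
  refine h1.trans ?_
  have h2 : c⁻¹ * (⨅ x, c * f x) ≤ ⨅ x, f x := by
    refine le_iInf fun x => ?_
    calc c⁻¹ * (⨅ y, c * f y) ≤ c⁻¹ * (c * f x) :=
          mul_le_mul_right (iInf_le _ x) _
      _ = f x := by rw [← mul_assoc, ENNReal.inv_mul_cancel hc0 hct, one_mul]
  calc (⨅ x, c * f x) = c * (c⁻¹ * ⨅ x, c * f x) := by
        rw [← mul_assoc, ENNReal.mul_inv_cancel hc0 hct, one_mul]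
    _ ≤ c * ⨅ x, f x := mul_le_mul_right h2 _
lemma le_mul_rpow_iInf {ι : Sort*} {a c : ℝ≥0∞} (hc0 : c ≠ 0) (hct : c ≠ ⊤) {q : ℝ}
    (hq : 0 < q) {f : ι → ℝ≥0∞} (h : ∀ x, a ≤ c * (f x) ^ q) : a ≤ c * (⨅ x, f x) ^ q := by
  have h1 : a ≤ c * ⨅ x, (f x) ^ q := le_mul_iInf' hc0 hct h
  refine h1.trans (mul_le_mul_right ?_ c)
  set u := ⨅ x, (f x) ^ q with hu
  have h2 : u ^ (1/q) ≤ ⨅ x, f x := by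
    refine le_iInf fun x => ?_
    have : u ≤ (f x) ^ q := iInf_le _ x
    calc u ^ (1/q) ≤ ((f x) ^ q) ^ (1/q) := ENNReal.rpow_le_rpow this (by positivity)
      _ = f x := by rw [← ENNReal.rpow_mul, mul_one_div_cancel hq.ne', ENNReal.rpow_one]
  calc u = (u ^ (1/q)) ^ q := by
        rw [← ENNReal.rpow_mul, one_div_mul_cancel hq.ne', ENNReal.rpow_one]
    _ ≤ (⨅ x, f x) ^ q := ENNReal.rpow_le_rpow h2 hq.le


/-- for `1 ≤ r ≤ p < ∞`, the dual quantization coefficient for the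
`ℓ^r` norm satisfies `Q^{dq}_{ℓ^r,p,d} ≤ d^{1/r} Q^{dq}_{|·|,p,1}`. -/
theorem Qdq_lr_le (r p : ℝ) (hr : 1 ≤ r) (hrp : r ≤ p) (d : ℕ) (hd : 1 ≤ d) :
    Qdq d (lrNorm d r) p ≤
      ENNReal.ofReal ((d : ℝ) ^ (1 / r)) * Qdq 1 (fun x => |x 0|) p := by
  classical
  have hr0 : (0:ℝ) < r := lt_of_lt_of_le one_pos hr
  have hp0 : (0:ℝ) < p := lt_of_lt_of_le hr0 hrp
  have hd0 : (0:ℝ) < d := by exact_mod_cast Nat.lt_of_lt_of_le Nat.zero_lt_one hd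
  have hdR : ((d:ℝ)) ≠ 0 := hd0.ne'
  set c0 : ℝ≥0∞ := ENNReal.ofReal ((d : ℝ) ^ (1 / r)) with hc0def
  have hc00 : c0 ≠ 0 := (ENNReal.ofReal_pos.mpr (Real.rpow_pos_of_pos hd0 _)).ne'
  have hc0t : c0 ≠ ⊤ := ENNReal.ofReal_ne_top
  set cp : ℝ := (d:ℝ) ^ (p/r - 1) with hcpdef
  have hcp0 : (0:ℝ) < cp := Real.rpow_pos_of_pos hd0 _
  have hcpE0 : ENNReal.ofReal cp ≠ 0 := (ENNReal.ofReal_pos.mpr hcp0).ne'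
  have H : ∀ m : ℕ, Qdq d (lrNorm d r) p ≤
      c0 * ((((m:ℕ) + 1 : ℕ) : ℝ≥0∞) ^ ((1 : ℝ) / (1:ℕ)) *
        (dnpPowN (fun x : Fin 1 → ℝ => |x 0|) (m + 1) p
          (unif (Set.Icc (0 : Fin 1 → ℝ) 1))) ^ ((1 : ℝ) / p)) := by
    intro m
    have hone : (((m:ℕ) + 1 : ℕ) : ℝ≥0∞) ^ ((1 : ℝ) / (1:ℕ)) = ((m + 1 : ℕ) : ℝ≥0∞) := by
      rw [Nat.cast_one, div_one, ENNReal.rpow_one]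
    rw [hone]
    have hsub : dnpPowN (fun x : Fin 1 → ℝ => |x 0|) (m + 1) p (unif (Set.Icc (0 : Fin 1 → ℝ) 1))
        = ⨅ x : {Γ'' : Finset (Fin 1 → ℝ) // Γ''.card ≤ m + 1},
            ∫⁻ ξ, FppowN (fun x : Fin 1 → ℝ => |x 0|) p x.1 ξ
              ∂(unif (Set.Icc (0 : Fin 1 → ℝ) 1)) := by
      rw [dnpPowN, iInf_subtype']
    rw [hsub, ← mul_assoc]
    have hcm0 : c0 * ((m + 1 : ℕ) : ℝ≥0∞) ≠ 0 :=
      mul_ne_zero hc00 (Nat.cast_ne_zero.mpr (Nat.succ_ne_zero m))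
    have hcmt : c0 * ((m + 1 : ℕ) : ℝ≥0∞) ≠ ⊤ := ENNReal.mul_ne_top hc0t (by simp)
    refine le_mul_rpow_iInf hcm0 hcmt (by positivity) fun Γs => ?_
    obtain ⟨Γ', hcard⟩ := Γs
    set I : ℝ≥0∞ := ∫⁻ ξ, FppowN (fun x : Fin 1 → ℝ => |x 0|) p Γ' ξ
      ∂(unif (Set.Icc (0 : Fin 1 → ℝ) 1)) with hIdef
    set Γbig : Finset (Fin d → ℝ) :=
      (Fintype.piFinset fun _ : Fin d => Γ').image (gridEmb d) with hΓbig
    have hcardbig : Γbig.card ≤ (m + 1) ^ d := by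
      calc Γbig.card ≤ (Fintype.piFinset fun _ : Fin d => Γ').card := Finset.card_image_le
        _ = ∏ _j : Fin d, Γ'.card := Fintype.card_piFinset _
        _ = Γ'.card ^ d := by rw [Finset.prod_const, Finset.card_univ, Fintype.card_fin]
        _ ≤ (m + 1) ^ d := Nat.pow_le_pow_left hcard d
    have hGmeas : Measurable (FppowN (fun x : Fin 1 → ℝ => |x 0|) p Γ') :=
      FppowN_measurable ((continuous_apply (0 : Fin 1)).abs) hp0.le Γ'
    -- pointwise bound
    have hpoint : ∀ ξ : Fin d → ℝ, FppowN (lrNorm d r) p Γbig ξ ≤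
        ENNReal.ofReal cp * ∑ j, FppowN (fun x : Fin 1 → ℝ => |x 0|) p Γ' (fun _ => ξ j) := by
      intro ξ
      refine le_mul_sum_sInf (FppowN (lrNorm d r) p Γbig ξ) (ENNReal.ofReal cp)
        hcpE0 ENNReal.ofReal_ne_top
        (fun j => { c | ∃ w : (Fin 1 → ℝ) → ℝ, (∀ x ∈ Γ', 0 ≤ w x) ∧ (∀ x ∈ Γ', w x ≤ 1) ∧
          (∑ x ∈ Γ', w x) = 1 ∧ (∑ x ∈ Γ', w x • x) = (fun _ => ξ j) ∧
          c = ENNReal.ofReal (∑ x ∈ Γ', w x *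
            ((fun x : Fin 1 → ℝ => |x 0|) ((fun _ => ξ j) - x)) ^ p) }) ?_
      intro f hf
      choose wj hw0 hw1 hws hwb hceq using hf
      refine (glue hd hr hrp Γ' ξ wj hw0 hw1 hws hwb).trans (le_of_eq ?_)
      congr 1
      refine Finset.sum_congr rfl fun j _ => ?_
      rw [hceq j]
      exact congrArg ENNReal.ofReal (Finset.sum_congr rfl fun y _ => rfl)
    -- integral bound
    have hdnp : dnpPowN (lrNorm d r) ((m + 1) ^ d) p (unif (Set.Icc (0 : Fin d → ℝ) 1))
        ≤ ENNReal.ofReal cp * ((d : ℝ≥0∞) * I) := by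
      refine le_trans (iInf₂_le Γbig hcardbig) ?_
      have hmeas_sum : Measurable (fun ξ : Fin d → ℝ =>
          ∑ j, FppowN (fun x : Fin 1 → ℝ => |x 0|) p Γ' (fun _ => ξ j)) :=
        Finset.measurable_sum _ fun j _ =>
          hGmeas.comp (measurable_pi_lambda _ (fun _ => measurable_pi_apply j))
      calc (∫⁻ ξ, FppowN (lrNorm d r) p Γbig ξ ∂(unif (Set.Icc (0 : Fin d → ℝ) 1)))
          ≤ ∫⁻ ξ, ENNReal.ofReal cp *
              ∑ j, FppowN (fun x : Fin 1 → ℝ => |x 0|) p Γ' (fun _ => ξ j)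
              ∂(unif (Set.Icc (0 : Fin d → ℝ) 1)) := lintegral_mono hpoint
        _ = ENNReal.ofReal cp * ∫⁻ ξ,
              ∑ j, FppowN (fun x : Fin 1 → ℝ => |x 0|) p Γ' (fun _ => ξ j)
              ∂(unif (Set.Icc (0 : Fin d → ℝ) 1)) := lintegral_const_mul _ hmeas_sum
        _ = ENNReal.ofReal cp * ((d : ℝ≥0∞) * I) := by
            rw [lintegral_sum_eval _ hGmeas]
    -- index choice
    have hpos : 0 < (m + 1) ^ d := pow_pos (Nat.succ_pos m) d
    set n0 : ℕ := (m + 1) ^ d - 1 with hn0def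
    have hn0 : n0 + 1 = (m + 1) ^ d := Nat.succ_pred_eq_of_pos hpos
    have hQle : Qdq d (lrNorm d r) p ≤
        (((n0 + 1 : ℕ)) : ℝ≥0∞) ^ ((1 : ℝ) / d) *
          (dnpPowN (lrNorm d r) (n0 + 1) p (unif (Set.Icc (0 : Fin d → ℝ) 1))) ^ ((1 : ℝ) / p) :=
      iInf_le _ n0
    rw [hn0] at hQle
    have K1 : ((((m + 1) ^ d : ℕ)) : ℝ≥0∞) ^ ((1 : ℝ) / d) = ((m + 1 : ℕ) : ℝ≥0∞) := by
      rw [Nat.cast_pow, ← ENNReal.rpow_natCast, ← ENNReal.rpow_mul, mul_one_div_cancel hdR,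
        ENNReal.rpow_one]
    rw [K1] at hQle
    have Kreal : ((d:ℝ) ^ (p/r - 1) * (d:ℝ)) ^ ((1:ℝ)/p) = (d:ℝ) ^ ((1:ℝ)/r) := by
      nth_rewrite 2 [← Real.rpow_one (d:ℝ)]
      rw [← Real.rpow_add hd0, ← Real.rpow_mul hd0.le]
      congr 1
      field_simp
      ring
    have K2 : (ENNReal.ofReal cp * ((d : ℝ≥0∞) * I)) ^ ((1:ℝ)/p) = c0 * I ^ ((1:ℝ)/p) := by
      rw [← mul_assoc, ENNReal.mul_rpow_of_nonneg _ _ (by positivity : (0:ℝ) ≤ 1/p)]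
      congr 1
      rw [show ((d : ℝ≥0∞)) = ENNReal.ofReal (d:ℝ) from (ENNReal.ofReal_natCast d).symm,
        ← ENNReal.ofReal_mul hcp0.le,
        ENNReal.ofReal_rpow_of_nonneg (by positivity) (by positivity), hc0def, hcpdef, Kreal]
    calc Qdq d (lrNorm d r) p
        ≤ ((m + 1 : ℕ) : ℝ≥0∞) *
            (dnpPowN (lrNorm d r) ((m + 1) ^ d) p
              (unif (Set.Icc (0 : Fin d → ℝ) 1))) ^ ((1:ℝ)/p) := hQle
      _ ≤ ((m + 1 : ℕ) : ℝ≥0∞) * (ENNReal.ofReal cp * ((d : ℝ≥0∞) * I)) ^ ((1:ℝ)/p) :=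
          mul_le_mul_right (ENNReal.rpow_le_rpow hdnp (by positivity)) _
      _ = ((m + 1 : ℕ) : ℝ≥0∞) * (c0 * I ^ ((1:ℝ)/p)) := by rw [K2]
      _ = (c0 * ((m + 1 : ℕ) : ℝ≥0∞)) * I ^ ((1:ℝ)/p) := by ring
  exact le_mul_iInf' hc00 hc0t H
end
end
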